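/- arXiv:2012.06535 — 12 statements merged into one kernel-verified Lean document; each statement's English description precedes it below -/
import Mathlib

section
/- Let f be a continuous function between metric spaces (X,d) and (Y,ρ), and let A be a subset of X. If f is TB-regular on A, then f is TB-regular on the closure of A. -/
/-!
Let `S ⊆ closure A` be totally bounded. For every `m`, take a finite `1/(m+1)`-net of `S` and
replace each net point `x` by a point `a ∈ A` with both `dist x a` and `dist (f x) (f a)` below
`1/(m+1)`; this is possible because `x ∈ closure A` and `f` is continuous at `x`. The union `T`
of these finite sets lies in `A` and is totally bounded, since all but finitely many of its
pieces lie close to `S`. Continuity of `f` at the points of `S` gives `f '' S ⊆ closure (f '' T)`,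
and `f '' T` is totally bounded by TB-regularity on `A`.
-/

/-- `f` is TB-regular on a subset `B` of `X` if `f '' S` is totally bounded for every
totally bounded subset `S` of `B`. -/
def TBRegularOn {X Y : Type*} [MetricSpace X] [MetricSpace Y] (f : X → Y) (B : Set X) : Prop :=
  ∀ S : Set X, S ⊆ B → TotallyBounded S → TotallyBounded (f '' S)

open Set Metric

section PseudoMetric

variable {X Y : Type*} [PseudoMetricSpace X] [PseudoMetricSpace Y]

lemma totallyBounded_of_forall_subset_thickening {T : Set X}
    (h : ∀ ε > 0, ∃ C : Set X, TotallyBounded C ∧ T ⊆ thickening ε C) :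
    TotallyBounded T := by
  refine totallyBounded_iff.2 fun ε hε => ?_
  obtain ⟨C, hC, hTC⟩ := h (ε / 2) (half_pos hε)
  obtain ⟨t, htfin, hCt⟩ := totallyBounded_iff.1 hC (ε / 2) (half_pos hε)
  refine ⟨t, htfin, fun x hx => ?_⟩
  obtain ⟨c, hc, hxc⟩ := mem_thickening_iff.1 (hTC hx)
  obtain ⟨y, hy, hcy⟩ := mem_iUnion₂.1 (hCt hc)
  refine mem_iUnion₂.2 ⟨y, hy, ?_⟩
  calc dist x y ≤ dist x c + dist c y := dist_triangle _ _ _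
    _ < ε / 2 + ε / 2 := add_lt_add hxc hcy
    _ = ε := add_halves ε

lemma totallyBounded_iUnion_of_finite_of_forall_dist_lt {S : Set X} (hS : TotallyBounded S)
    {F : ℕ → Set X} (hF : ∀ m, (F m).Finite)
    (hFS : ∀ m, ∀ y ∈ F m, ∃ x ∈ S, dist y x < 1 / (m + 1)) :
    TotallyBounded (⋃ m, F m) := by
  refine totallyBounded_of_forall_subset_thickening fun ε hε => ?_
  obtain ⟨M, hM⟩ := exists_nat_one_div_lt hε
  have hfin : (⋃ m ∈ Iio M, F m).Finite := (finite_Iio M).biUnion fun m _ => hF m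
  refine ⟨S ∪ ⋃ m ∈ Iio M, F m, hS.union hfin.totallyBounded, fun y hy => ?_⟩
  obtain ⟨m, hym⟩ := mem_iUnion.1 hy
  rcases lt_or_ge m M with hmM | hMm
  · exact self_subset_thickening hε _ (mem_union_right _ (mem_biUnion hmM hym))
  · obtain ⟨x, hxS, hyx⟩ := hFS m y hym
    refine mem_thickening_iff.2 ⟨x, mem_union_left _ hxS, ?_⟩
    calc dist y x < 1 / (m + 1) := hyx
      _ ≤ 1 / (M + 1) := Nat.one_div_le_one_div hMm
      _ < ε := hM

lemma exists_mem_dist_lt_and_dist_image_lt {f : X → Y} {A : Set X} {x : X}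
    (hxA : x ∈ closure A) (hf : ContinuousAt f x) {r : ℝ} (hr : 0 < r) :
    ∃ a ∈ A, dist x a < r ∧ dist (f x) (f a) < r := by
  have hnhds : ball x r ∩ f ⁻¹' ball (f x) r ∈ nhds x :=
    Filter.inter_mem (ball_mem_nhds x hr) (hf.preimage_mem_nhds (ball_mem_nhds (f x) hr))
  obtain ⟨a, ⟨hxa, hfa⟩, haA⟩ := mem_closure_iff_nhds.1 hxA _ hnhds
  exact ⟨a, haA, by rwa [dist_comm], by rwa [dist_comm]⟩

theorem exists_totallyBounded_subset_image_subset_closure_image {f : X → Y} {S A : Set X}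
    (hS : TotallyBounded S) (hSA : S ⊆ closure A) (hf : Continuous f) :
    ∃ T ⊆ A, TotallyBounded T ∧ f '' S ⊆ closure (f '' T) := by
  choose t hts htfin hcov using fun m : ℕ =>
    finite_approx_of_totallyBounded hS (1 / (m + 1)) Nat.one_div_pos_of_nat
  have happrox : ∀ m : ℕ, ∀ x ∈ S,
      ∃ a ∈ A, dist x a < 1 / (m + 1) ∧ dist (f x) (f a) < 1 / (m + 1) := fun m x hx =>
    exists_mem_dist_lt_and_dist_image_lt (hSA hx) hf.continuousAt Nat.one_div_pos_of_nat
  choose! g hgA hgx hgf using happrox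
  refine ⟨⋃ m, g m '' t m, iUnion_subset fun m => ?_, ?_, ?_⟩
  · rintro _ ⟨x, hx, rfl⟩
    exact hgA m x (hts m hx)
  · refine totallyBounded_iUnion_of_finite_of_forall_dist_lt hS (fun m => (htfin m).image _) ?_
    rintro m _ ⟨x, hx, rfl⟩
    exact ⟨x, hts m hx, by rw [dist_comm]; exact hgx m x (hts m hx)⟩
  · rintro _ ⟨s, hs, rfl⟩
    refine Metric.mem_closure_iff.2 fun ε hε => ?_
    obtain ⟨δ, hδ, hfδ⟩ := Metric.continuousAt_iff.1 hf.continuousAt (ε / 2) (half_pos hε)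
    obtain ⟨m, hm⟩ := exists_nat_one_div_lt (lt_min hδ (half_pos hε))
    obtain ⟨x, hx, hsx⟩ := mem_iUnion₂.1 (hcov m hs)
    refine ⟨f (g m x), mem_image_of_mem f (mem_iUnion.2 ⟨m, mem_image_of_mem _ hx⟩), ?_⟩
    have hsx : dist x s < δ := (mem_ball'.1 hsx).trans (hm.trans_le (min_le_left _ _))
    calc dist (f s) (f (g m x)) ≤ dist (f s) (f x) + dist (f x) (f (g m x)) := dist_triangle _ _ _
      _ < ε / 2 + ε / 2 := by
        rw [dist_comm (f s)]
        exact add_lt_add (hfδ hsx) ((hgf m x (hts m hx)).trans (hm.trans_le (min_le_right _ _)))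
      _ = ε := add_halves ε

end PseudoMetric

theorem tbRegularOn_closure {X Y : Type*} [MetricSpace X] [MetricSpace Y]
    (f : X → Y) (hf : Continuous f) (A : Set X) (hA : TBRegularOn f A) :
    TBRegularOn f (closure A) := by
  intro S hSA hS
  obtain ⟨T, hTA, hT, hST⟩ := exists_totallyBounded_subset_image_subset_closure_image hS hSA hf
  exact (hA T hTA hT).closure.subset hST
end

section
/- Let (X,d) be a metric space. Every TB-regular function from (X,d) to any other metric space (Y,ρ) is continuous if and only if (X,d) is discrete, i.e., every point of X is isolated. -/
universe u v

/-- `f` is TB-regular if it maps totally bounded sets to totally bounded sets. -/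
def TBRegular {X : Type u} {Y : Type v} [MetricSpace X] [MetricSpace Y] (f : X → Y) : Prop :=
  ∀ A : Set X, TotallyBounded A → TotallyBounded (f '' A)

/-! A non-isolated point `x` is a discontinuity of the indicator of `{x}`, which, having finite
range, is TB-regular. Conversely every map out of a discrete space is continuous. -/

theorem tbRegular_of_finite_range {X : Type u} {Y : Type v} [MetricSpace X] [MetricSpace Y]
    {f : X → Y} (hf : (Set.range f).Finite) : TBRegular f :=
  fun _ _ => (hf.subset (Set.image_subset_range f _)).totallyBounded

theorem discreteTopology_iff_forall_exists_dist_lt_imp_eq {X : Type u} [MetricSpace X] :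
    DiscreteTopology X ↔ ∀ x : X, ∃ ε > 0, ∀ y : X, dist x y < ε → y = x := by
  simp only [discreteTopology_iff_isOpen_singleton, Metric.isOpen_singleton_iff, dist_comm]

theorem discreteTopology_of_forall_tbRegular_continuous {X : Type u} [MetricSpace X]
    (h : ∀ f : X → ULift.{v} ℕ, TBRegular f → Continuous f) : DiscreteTopology X := by
  classical
  refine discreteTopology_iff_isOpen_singleton.mpr fun x => ?_
  let f : X → ULift.{v} ℕ := fun z => ⟨if z = x then 1 else 0⟩
  have hrange : (Set.range f).Finite :=
    (Set.toFinite {⟨0⟩, ⟨1⟩}).subset <| Set.range_subset_iff.mpr fun z => by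
      by_cases hz : z = x <;> simp [f, hz]
  have hfiber : f ⁻¹' {f x} = {x} := by
    ext z
    by_cases hz : z = x <;> simp [f, hz]
  rw [← hfiber]
  exact continuous_discrete_rng.mp (h f (tbRegular_of_finite_range hrange)) (f x)

theorem tbRegular_continuous_iff_discrete {X : Type u} [MetricSpace X] :
    (∀ (Y : Type v) [MetricSpace Y] (f : X → Y), TBRegular f → Continuous f) ↔
      ∀ x : X, ∃ ε > 0, ∀ y : X, dist x y < ε → y = x := by
  rw [← discreteTopology_iff_forall_exists_dist_lt_imp_eq]
  constructor
  · intro h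
    exact discreteTopology_of_forall_tbRegular_continuous (h _)
  · intro _ Y _ f _
    exact continuous_of_discreteTopology
end

section
/- Let (X,d) be a metric space. Every TB-regular function from (X,d) to any other metric space (Y,ρ) is Cauchy continuous if and only if (X,d) is complete and discrete (every point of X is isolated). -/
universe u v

/-- `f` is Cauchy continuous if it maps Cauchy sequences to Cauchy sequences. -/
def CauchyCont {X : Type u} {Y : Type v} [MetricSpace X] [MetricSpace Y] (f : X → Y) : Prop :=
  ∀ u : ℕ → X, CauchySeq u → CauchySeq (f ∘ u)

/-! Every finitely valued map is TB-regular. Applied to indicator functions, the hypothesis says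
that each Cauchy sequence is eventually inside or eventually outside every subset of `X`, i.e. its
tail filter is an ultrafilter; being countably generated, it is principal, so every Cauchy sequence
is eventually constant. That property is exactly completeness together with discreteness. -/

open Filter Set Topology

theorem Set.Infinite.exists_disjoint_infinite_subsets {α : Type*} {r : Set α} (h : r.Infinite) :
    ∃ s t, s ⊆ r ∧ t ⊆ r ∧ Disjoint s t ∧ s.Infinite ∧ t.Infinite := by
  obtain ⟨s, t, rfl, hdisj, hcard⟩ := h.exists_union_disjoint_cardinal_eq_of_infinite
  have hfin : s.Finite ↔ t.Finite := by
    rw [← Cardinal.lt_aleph0_iff_set_finite, hcard, Cardinal.lt_aleph0_iff_set_finite]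
  have hs : s.Infinite := fun hs => h (hs.union (hfin.1 hs))
  exact ⟨s, t, subset_union_left, subset_union_right, hdisj, hs, fun ht => hs (hfin.2 ht)⟩

theorem frequently_mem_of_infinite_of_subset_range {α : Type*} {u : ℕ → α} {s : Set α}
    (hs : s.Infinite) (hsu : s ⊆ range u) : ∃ᶠ n in atTop, u n ∈ s :=
  Nat.frequently_atTop_iff_infinite.2 <| Infinite.of_image u (s := u ⁻¹' s) <| by
    rwa [image_preimage_eq_of_subset hsu]

theorem eventuallyConst_of_forall_eventuallyConst_preimage {α : Type*} {u : ℕ → α}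
    (h : ∀ s : Set α, EventuallyConst (u ⁻¹' s) atTop) : EventuallyConst u atTop := by
  -- Either some value recurs, or the range is infinite and splits into two infinite halves.
  by_cases hrep : ∃ a, ∃ᶠ n in atTop, u n = a
  · obtain ⟨a, ha⟩ := hrep
    have : Nonempty α := ⟨a⟩
    rcases eventuallyConst_set.1 (h {a}) with hin | hout
    · exact eventuallyConst_iff_exists_eventuallyEq.2 ⟨a, hin⟩
    · exact absurd ha (not_frequently.2 hout)
  · push Not at hrep
    have hinf : (range u).Infinite := fun hfin => by
      obtain ⟨n, hn⟩ := ((eventually_all_finite hfin).2 fun a _ => hrep a).exists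
      exact hn (u n) (mem_range_self n) rfl
    obtain ⟨s, t, hsu, htu, hdisj, hs, ht⟩ := hinf.exists_disjoint_infinite_subsets
    rcases eventuallyConst_set.1 (h s) with hin | hout
    · refine absurd hin (not_eventually.2 ?_)
      exact (frequently_mem_of_infinite_of_subset_range ht htu).mono
        fun n hn => hdisj.notMem_of_mem_right hn
    · exact absurd (frequently_mem_of_infinite_of_subset_range hs hsu) (not_frequently.2 hout)

theorem CauchySeq.eventuallyConst_of_le_dist {Y : Type*} [PseudoMetricSpace Y] {v : ℕ → Y}
    (hv : CauchySeq v) {δ : ℝ} (hδ : 0 < δ) (hsep : ∀ m n, v m ≠ v n → δ ≤ dist (v m) (v n)) :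
    EventuallyConst v atTop := by
  obtain ⟨N, hN⟩ := Metric.cauchySeq_iff'.1 hv δ hδ
  exact eventuallyConst_atTop.2
    ⟨N, fun n hn => by_contra fun hne => (hN n hn).not_ge (hsep _ _ hne)⟩

theorem exists_tendsto_nhds_of_eventuallyConst {Y : Type*} [TopologicalSpace Y] {v : ℕ → Y}
    (h : EventuallyConst v atTop) : ∃ y, Tendsto v atTop (𝓝 y) := by
  obtain ⟨i, hi⟩ := eventuallyConst_atTop.1 h
  exact ⟨v i, tendsto_atTop_of_eventually_const hi⟩

section Indicator

variable {Y : Type v} [MetricSpace Y] [Zero Y]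

theorem tbRegular_indicator_const {X : Type u} [MetricSpace X] (s : Set X) (c : Y) :
    TBRegular (s.indicator fun _ => c) := by
  intro A _
  refine (toFinite ({0, c} : Set Y)).totallyBounded.subset ?_
  rintro _ ⟨x, -, rfl⟩
  rcases indicator_eq_zero_or_self s (fun _ => c) x with h | h <;> simp [h]

theorem eventuallyConst_preimage_of_cauchySeq_indicator {α : Type*} {c : Y} (hc : c ≠ 0)
    {s : Set α} {u : ℕ → α} (h : CauchySeq ((s.indicator fun _ => c) ∘ u)) :
    EventuallyConst (u ⁻¹' s) atTop := by
  have hsep (m n : ℕ) (hne : (s.indicator fun _ => c) (u m) ≠ (s.indicator fun _ => c) (u n)) :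
      dist 0 c ≤ dist ((s.indicator fun _ => c) (u m)) ((s.indicator fun _ => c) (u n)) := by
    rcases indicator_eq_zero_or_self s (fun _ => c) (u m) with hm | hm <;>
      rcases indicator_eq_zero_or_self s (fun _ => c) (u n) with hn | hn <;>
      simp_all [dist_comm]
  exact (h.eventuallyConst_of_le_dist (dist_pos.2 hc.symm) hsep).of_indicator_const hc

end Indicator

section CauchySeqEventuallyConst

variable {X : Type u} [MetricSpace X]

theorem CauchySeq.eventuallyConst_of_isolated [CompleteSpace X]
    (hiso : ∀ x : X, ∃ ε > 0, ∀ y : X, dist x y < ε → y = x) {u : ℕ → X} (hu : CauchySeq u) :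
    EventuallyConst u atTop := by
  obtain ⟨a, ha⟩ := cauchySeq_tendsto_of_complete hu
  obtain ⟨ε, hε, hiso⟩ := hiso a
  have : Nonempty X := ⟨a⟩
  exact eventuallyConst_iff_exists_eventuallyEq.2
    ⟨a, (Metric.tendsto_nhds.1 ha ε hε).mono fun n hn => hiso (u n) (by rwa [dist_comm])⟩

theorem completeSpace_of_cauchySeq_eventuallyConst
    (h : ∀ u : ℕ → X, CauchySeq u → EventuallyConst u atTop) : CompleteSpace X :=
  Metric.complete_of_cauchySeq_tendsto fun u hu => exists_tendsto_nhds_of_eventuallyConst (h u hu)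

theorem isolated_of_cauchySeq_eventuallyConst
    (h : ∀ u : ℕ → X, CauchySeq u → EventuallyConst u atTop) (x : X) :
    ∃ ε > 0, ∀ y : X, dist x y < ε → y = x := by
  by_contra! hx
  choose y hyx hne using fun n : ℕ => hx (1 / (n + 1)) Nat.one_div_pos_of_nat
  have hlim : Tendsto y atTop (𝓝 x) := by
    refine tendsto_iff_dist_tendsto_zero.2 <|
      squeeze_zero (fun _ => dist_nonneg) (fun n => ?_) tendsto_one_div_add_atTop_nhds_zero_nat
    rw [dist_comm]
    exact (hyx n).le
  have : Nonempty X := ⟨x⟩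
  obtain ⟨a, ha⟩ := eventuallyConst_iff_exists_eventuallyEq.1 (h y hlim.cauchySeq)
  obtain rfl : a = x := tendsto_nhds_unique (tendsto_const_nhds.congr' ha.symm) hlim
  obtain ⟨n, hn⟩ := ha.exists
  exact hne n hn

end CauchySeqEventuallyConst

theorem tbRegular_cauchyCont_iff_complete_discrete {X : Type u} [MetricSpace X] :
    (∀ (Y : Type v) [MetricSpace Y] (f : X → Y), TBRegular f → CauchyCont f) ↔
      (CompleteSpace X ∧ ∀ x : X, ∃ ε > 0, ∀ y : X, dist x y < ε → y = x) := by
  constructor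
  · intro H
    have hconst (u : ℕ → X) (hu : CauchySeq u) : EventuallyConst u atTop :=
      eventuallyConst_of_forall_eventuallyConst_preimage fun s =>
        eventuallyConst_preimage_of_cauchySeq_indicator one_ne_zero
          (H (ULift.{v} ℝ) _ (tbRegular_indicator_const s 1) u hu)
    exact ⟨completeSpace_of_cauchySeq_eventuallyConst hconst,
      isolated_of_cauchySeq_eventuallyConst hconst⟩
  · rintro ⟨_, hiso⟩ Y _ f _ u hu
    obtain ⟨y, hy⟩ :=
      exists_tendsto_nhds_of_eventuallyConst ((hu.eventuallyConst_of_isolated hiso).comp f)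
    exact hy.cauchySeq
end

section
/- Let (X,d) be a metric space. Every TB-regular function from (X,d) to any other metric space (Y,ρ) is uniformly continuous if and only if (X,d) is uniformly discrete, i.e., there exists ε > 0 such that d(x,y) ≥ ε for all distinct x, y ∈ X. -/
universe u v

open scoped Classical in
private lemma indicator_tbRegular {X : Type u} [MetricSpace X] (A : Set X) :
    TBRegular (fun x : X => (ULift.up (if x ∈ A then (1:ℝ) else 0) : ULift.{v} ℝ)) := by
  intro B _
  refine TotallyBounded.subset ?_
    (((Set.finite_singleton (ULift.up (0:ℝ))).insert (ULift.up 1)).totallyBounded)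
  rintro z ⟨x, -, rfl⟩
  by_cases hx : x ∈ A <;> simp [hx]

theorem tbRegular_unifCont_iff_uniformlyDiscrete {X : Type u} [MetricSpace X] :
    (∀ (Y : Type v) [MetricSpace Y] (f : X → Y), TBRegular f → UniformContinuous f) ↔
      ∃ ε > 0, ∀ x y : X, x ≠ y → ε ≤ dist x y := by
  constructor
  · intro H
    classical
    by_contra hclose
    push_neg at hclose
    -- hc : ∀ ε > 0, ∃ x y, x ≠ y ∧ dist x y < ε
    -- Step 1: every point is isolated.
    have iso : ∀ v : X, ∃ r > 0, ∀ y, y ≠ v → r ≤ dist v y := by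
      intro v
      have hf := H (ULift.{v} ℝ)
        (fun x => ULift.up (if x ∈ ({v} : Set X) then (1:ℝ) else 0))
        (indicator_tbRegular _)
      rw [Metric.uniformContinuous_iff] at hf
      obtain ⟨δ, hδ, hδ'⟩ := hf 1 one_pos
      refine ⟨δ, hδ, fun y hy => ?_⟩
      by_contra hlt
      push_neg at hlt
      have h2 := hδ' (a := v) (b := y) hlt
      simp only [ULift.dist_up_up, Set.mem_singleton_iff, if_pos rfl, if_neg hy] at h2
      rw [Real.dist_eq] at h2
      norm_num at h2
    -- Step 2: fresh close pairs exist.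
    have fresh : ∀ (F : Finset X) (n : ℕ), ∃ p : X × X,
        p.1 ≠ p.2 ∧ dist p.1 p.2 < 1/(n+1) ∧ p.1 ∉ F ∧ p.2 ∉ F := by
      intro F n
      have hbound : ∃ c > 0, ∀ v ∈ F, ∀ y, y ≠ v → c ≤ dist v y := by
        classical
        induction F using Finset.induction with
        | empty => exact ⟨1, one_pos, by simp⟩
        | @insert a s ha ih =>
          obtain ⟨c, hc, hcf⟩ := ih
          obtain ⟨r, hr, hrf⟩ := iso a
          refine ⟨min c r, lt_min hc hr, fun v hv y hy => ?_⟩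
          rcases Finset.mem_insert.mp hv with rfl | hv
          · exact le_trans (min_le_right _ _) (hrf y hy)
          · exact le_trans (min_le_left _ _) (hcf v hv y hy)
      obtain ⟨c, hc, hcf⟩ := hbound
      have hεpos : (0:ℝ) < min c (1/(n+1)) := lt_min hc (by positivity)
      obtain ⟨x, y, hxy, hd⟩ := hclose _ hεpos
      refine ⟨(x, y), hxy, lt_of_lt_of_le hd (min_le_right _ _), ?_, ?_⟩
      · intro hxF
        have := hcf x hxF y (Ne.symm hxy)
        have := lt_of_lt_of_le hd (min_le_left _ _)
        linarith
      · intro hyF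
        have h1 := hcf y hyF x hxy
        rw [dist_comm] at h1
        have := lt_of_lt_of_le hd (min_le_left _ _)
        linarith
    classical
    choose pick hp1 hp2 hp3 hp4 using fresh
    set g : ℕ → Finset X := fun n =>
      Nat.rec ∅ (fun m Fm => Fm ∪ {(pick Fm m).1, (pick Fm m).2}) n with hg
    set P : ℕ → X × X := fun n => pick (g n) n with hP
    have hg_succ : ∀ n, g (n+1) = g n ∪ {(P n).1, (P n).2} := fun n => rfl
    have hg_mono : ∀ {m n : ℕ}, m ≤ n → g m ⊆ g n := by
      intro m n hmn
      induction n with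
      | zero => simp [Nat.le_zero.mp hmn]
      | succ k ih =>
        rcases Nat.lt_or_ge m (k+1) with h | h
        · exact (ih (Nat.lt_succ_iff.mp h)).trans (by rw [hg_succ]; exact Finset.subset_union_left)
        · have : m = k + 1 := le_antisymm hmn h
          subst this; exact Finset.Subset.refl _
    have hmem1 : ∀ n, (P n).1 ∈ g (n+1) := by
      intro n; rw [hg_succ]; exact Finset.mem_union_right _ (by simp)
    have hmem2 : ∀ n, (P n).2 ∈ g (n+1) := by
      intro n; rw [hg_succ]; exact Finset.mem_union_right _ (by simp)
    -- the splitting set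
    set A : Set X := {x | ∃ n, (P n).1 = x} with hA
    have hf := H (ULift.{v} ℝ)
      (fun x => ULift.up (if x ∈ A then (1:ℝ) else 0)) (indicator_tbRegular _)
    rw [Metric.uniformContinuous_iff] at hf
    obtain ⟨δ, hδ, hδ'⟩ := hf 1 one_pos
    obtain ⟨n, hn⟩ := exists_nat_one_div_lt hδ
    have hdist : dist (P n).1 (P n).2 < δ := lt_trans (hp2 (g n) n) hn
    have hx : (P n).1 ∈ A := ⟨n, rfl⟩
    have hy : (P n).2 ∉ A := by
      rintro ⟨m, hm⟩
      rcases lt_trichotomy m n with h | rfl | h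
      · have h1 : (P m).1 ∈ g n := hg_mono (Nat.succ_le_of_lt h) (hmem1 m)
        rw [hm] at h1
        exact hp4 (g n) n h1
      · exact hp1 (g m) m hm
      · have h1 : (P n).2 ∈ g m := hg_mono (Nat.succ_le_of_lt h) (hmem2 n)
        rw [← hm] at h1
        exact hp3 (g m) m h1
    have h2 := hδ' (a := (P n).1) (b := (P n).2) hdist
    simp only [ULift.dist_up_up, if_pos hx, if_neg hy] at h2
    rw [Real.dist_eq] at h2
    norm_num at h2
  · rintro ⟨ε, hε, hsep⟩ Y _ f _
    rw [Metric.uniformContinuous_iff]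
    intro ε' hε'
    refine ⟨ε, hε, fun {a b} hab => ?_⟩
    have : a = b := by
      by_contra h
      exact absurd hab (not_lt.mpr (hsep a b h))
    subst this
    simpa using hε'
end

section
/- Let (X,d) be a metric space. The following are equivalent: (a) (X,d) is complete; (b) each continuous function from (X,d) to any other metric space (Y,ρ) is TB-regular; (c) each locally Lipschitz function from (X,d) to any other metric space (Y,ρ) is TB-regular; (d) each real-valued locally Lipschitz function on (X,d) is TB-regular. -/
universe u v

/-- `f` is locally Lipschitz if each point has an open ball around it on which `f` is
Lipschitz. -/
def LocallyLip {X : Type u} {Y : Type v} [MetricSpace X] [MetricSpace Y] (f : X → Y) : Prop :=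
  ∀ x : X, ∃ δ > (0 : ℝ), ∃ K : NNReal, LipschitzOnWith K f (Metric.ball x δ)

/-!
In a complete space a totally bounded set has compact closure, so continuous maps preserve total
boundedness. Conversely, if `X` is not complete, pick a point `ξ` of the completion outside `X`
and a sequence `uₙ → ξ` in `X`. The function `x ↦ 1 / d(x, ξ)` is locally Lipschitz on `X`, since
`d(·, ξ)` is `1`-Lipschitz and bounded away from `0` near every point of `X`, but it is unbounded
on the totally bounded set `{uₙ}`.
-/

open Set Filter Topology Metric

variable {X Y Z : Type*} [MetricSpace X] [MetricSpace Y] [MetricSpace Z]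

theorem tbRegular_of_continuous [CompleteSpace X] {f : X → Y} (hf : Continuous f) :
    TBRegular f := fun _ hA =>
  ((hA.closure.isCompact_of_isClosed isClosed_closure).image hf).totallyBounded.subset
    (image_mono subset_closure)

theorem LocallyLip.continuous {f : X → Y} (hf : LocallyLip f) : Continuous f :=
  continuous_iff_continuousAt.2 fun x =>
    let ⟨_, hδ, _, hK⟩ := hf x
    hK.continuousOn.continuousAt (ball_mem_nhds x hδ)

theorem LipschitzWith.locallyLip {K : NNReal} {f : X → Y} (hf : LipschitzWith K f) :
    LocallyLip f :=
  fun _ => ⟨1, one_pos, K, hf.lipschitzOnWith⟩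

theorem LipschitzWith.comp_locallyLip {K : NNReal} {g : Y → Z} {f : X → Y}
    (hg : LipschitzWith K g) (hf : LocallyLip f) : LocallyLip (g ∘ f) := fun x =>
  let ⟨δ, hδ, L, hL⟩ := hf x
  ⟨δ, hδ, K * L, hg.comp_lipschitzOnWith hL⟩

theorem TBRegular.of_isometry_comp {g : Y → Z} {f : X → Y} (hg : Isometry g)
    (h : TBRegular (g ∘ f)) : TBRegular f := fun A hA =>
  (totallyBounded_image_iff hg.isUniformInducing).1 (image_comp g f A ▸ h A hA)

theorem lipschitzOnWith_inv_Ici {r : NNReal} (hr : 0 < r) :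
    LipschitzOnWith (r ^ 2)⁻¹ (fun t : ℝ => t⁻¹) (Ici (r : ℝ)) := by
  refine LipschitzOnWith.of_dist_le_mul fun a ha b hb => ?_
  have ha0 : 0 < a := (NNReal.coe_pos.2 hr).trans_le ha
  have hb0 : 0 < b := (NNReal.coe_pos.2 hr).trans_le hb
  have hab : (r : ℝ) ^ 2 ≤ a * b := by rw [sq]; exact mul_le_mul ha hb r.2 ha0.le
  calc dist a⁻¹ b⁻¹ = dist a b / (a * b) := by
        rw [Real.dist_eq, Real.dist_eq, inv_sub_inv ha0.ne' hb0.ne', abs_div, abs_sub_comm,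
          abs_of_pos (mul_pos ha0 hb0)]
    _ ≤ dist a b / (r : ℝ) ^ 2 := div_le_div_of_nonneg_left dist_nonneg (by positivity) hab
    _ = _ := by push_cast; ring

theorem LipschitzWith.locallyLip_inv {g : X → ℝ} (hg : LipschitzWith 1 g) (hpos : ∀ x, 0 < g x) :
    LocallyLip fun x => (g x)⁻¹ := by
  intro x
  set r : NNReal := ⟨g x / 2, (half_pos (hpos x)).le⟩
  have hr : 0 < r := half_pos (hpos x)
  -- on `ball x r` the function `g` stays above `g x / 2`, where `t ↦ t⁻¹` is Lipschitz
  have hmaps : MapsTo g (ball x r) (Ici (r : ℝ)) := fun y hy => by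
    have hgy := hg.dist_le_mul y x
    rw [NNReal.coe_one, one_mul, Real.dist_eq] at hgy
    have hr_def : (r : ℝ) = g x / 2 := rfl
    rw [mem_ball, hr_def] at hy
    rw [mem_Ici, hr_def]
    linarith [neg_abs_le (g y - g x)]
  exact ⟨r, hr, _, (lipschitzOnWith_inv_Ici hr).comp hg.lipschitzOnWith hmaps⟩

theorem not_tbRegular_of_tendsto_atTop {f : X → ℝ} {u : ℕ → X} (hu : TotallyBounded (range u))
    (hf : Tendsto (f ∘ u) atTop atTop) : ¬TBRegular f := fun h =>
  not_bddAbove_of_tendsto_atTop hf <| range_comp f u ▸ (h _ hu).isBounded.bddAbove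

open UniformSpace in
theorem exists_locallyLip_not_tbRegular_of_not_completeSpace (hX : ¬CompleteSpace X) :
    ∃ f : X → ℝ, LocallyLip f ∧ ¬TBRegular f := by
  have hiso : Isometry ((↑) : X → Completion X) := Completion.coe_isometry
  obtain ⟨ξ, hξ⟩ : ∃ ξ : Completion X, ξ ∉ range ((↑) : X → Completion X) := by
    by_contra! h
    exact hX (hiso.isUniformInducing.completeSpace (eq_univ_of_forall h ▸ isComplete_univ))
  obtain ⟨v, hv_mem, hv⟩ := mem_closure_iff_seq_limit.1 (Completion.denseRange_coe ξ)
  choose u hu using hv_mem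
  have hcoe_u : Tendsto (fun n => (u n : Completion X)) atTop (𝓝 ξ) := by simpa only [hu] using hv
  have hpos : ∀ x : X, 0 < dist (x : Completion X) ξ := fun x =>
    dist_pos.2 fun h => hξ ⟨x, h⟩
  have hdist : LipschitzWith 1 fun x : X => dist (x : Completion X) ξ := by
    have := (LipschitzWith.dist_left ξ).comp hiso.lipschitz
    rwa [mul_one] at this
  refine ⟨fun x => (dist (x : Completion X) ξ)⁻¹, hdist.locallyLip_inv hpos,
    not_tbRegular_of_tendsto_atTop (u := u) ?_ ?_⟩
  · rw [← totallyBounded_image_iff hiso.isUniformInducing, ← range_comp]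
    exact hcoe_u.cauchySeq.totallyBounded_range
  · refine tendsto_inv_nhdsGT_zero.comp (tendsto_nhdsWithin_iff.2 ⟨?_, .of_forall fun n => hpos _⟩)
    exact tendsto_iff_dist_tendsto_zero.1 hcoe_u

theorem complete_iff_continuous_tbRegular {X : Type u} [MetricSpace X] :
    List.TFAE
      [CompleteSpace X,
       ∀ (Y : Type v) [MetricSpace Y] (f : X → Y), Continuous f → TBRegular f,
       ∀ (Y : Type v) [MetricSpace Y] (f : X → Y), LocallyLip f → TBRegular f,
       ∀ f : X → ℝ, LocallyLip f → TBRegular f] := by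
  tfae_have 1 → 2 := fun _ _ _ _ hf => tbRegular_of_continuous hf
  tfae_have 2 → 3 := fun h Y _ f hf => h Y f hf.continuous
  tfae_have 3 → 4 := fun h f hf =>
    have hup : Isometry (ULift.up.{v} : ℝ → ULift.{v} ℝ) := Isometry.of_dist_eq fun _ _ => rfl
    (h _ _ (hup.lipschitz.comp_locallyLip hf)).of_isometry_comp hup
  tfae_have 4 → 1 := fun h => by
    by_contra hX
    obtain ⟨f, hf, hf_not⟩ := exists_locallyLip_not_tbRegular_of_not_completeSpace hX
    exact hf_not (h f hf)
  tfae_finish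
end

section
/- Let (X,d) be a metric space. The following are equivalent: (a) (X,d) is complete; (b) each continuous TB-regular function from (X,d) to any other metric space (Y,ρ) is Cauchy continuous; (c) each real-valued continuous TB-regular function on (X,d) is Cauchy continuous. -/
universe u v

/-!
On a complete space a continuous map sends convergent, hence Cauchy, sequences to convergent
ones. Conversely, let `u` be a Cauchy sequence without limit. Its range is infinite, so `u` has an
injective subsequence `w`, and no subsequence of `w` converges, so the ranges of the even and of
the odd terms of `w` are disjoint closed sets. An Urysohn function separating them is continuous,
bounded (hence TB-regular) and alternates between `0` and `1` along the Cauchy sequence `w`.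
-/

open Filter Set Topology

section Sequences

variable {X : Type*} [UniformSpace X] {u : ℕ → X}

theorem CauchySeq.not_tendsto_comp (hu : CauchySeq u) (hlim : ∀ a, ¬Tendsto u atTop (𝓝 a))
    {φ : ℕ → ℕ} (hφ : Tendsto φ atTop atTop) (a : X) : ¬Tendsto (u ∘ φ) atTop (𝓝 a) :=
  fun h => hlim a (tendsto_nhds_of_cauchySeq_of_subseq hu hφ h)

theorem CauchySeq.eq_of_tendsto_comp [T2Space X] (hu : CauchySeq u) {φ ψ : ℕ → ℕ}
    (hφ : Tendsto φ atTop atTop) (hψ : Tendsto ψ atTop atTop) {a b : X}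
    (ha : Tendsto (u ∘ φ) atTop (𝓝 a)) (hb : Tendsto (u ∘ ψ) atTop (𝓝 b)) : a = b :=
  tendsto_nhds_unique (tendsto_nhds_of_cauchySeq_of_subseq hu hφ ha)
    (tendsto_nhds_of_cauchySeq_of_subseq hu hψ hb)

theorem CauchySeq.isClosed_range [SequentialSpace X] [T1Space X] (hu : CauchySeq u)
    (hlim : ∀ a, ¬Tendsto u atTop (𝓝 a)) : IsClosed (range u) :=
  isClosed_range_of_not_tendsto fun a _ hφ => hu.not_tendsto_comp hlim hφ.tendsto_atTop a

theorem CauchySeq.infinite_range [FirstCountableTopology X] (hu : CauchySeq u)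
    (hlim : ∀ a, ¬Tendsto u atTop (𝓝 a)) : (range u).Infinite := by
  intro hfin
  obtain ⟨a, -, φ, hφ, ha⟩ := hfin.isCompact.tendsto_subseq (mem_range_self (f := u))
  exact hu.not_tendsto_comp hlim hφ.tendsto_atTop a ha

end Sequences

theorem exists_injective_comp_of_infinite_range {α : Type*} {u : ℕ → α} (hu : (range u).Infinite) :
    ∃ φ : ℕ → ℕ, Function.Injective φ ∧ Function.Injective (u ∘ φ) := by
  choose φ hφ using fun k => (hu.natEmbedding _ k).2
  have hinj : Function.Injective (u ∘ φ) := by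
    intro i j hij
    simp only [Function.comp_apply, hφ] at hij
    exact (hu.natEmbedding _).injective (Subtype.ext hij)
  exact ⟨φ, hinj.of_comp, hinj⟩

theorem exists_injective_cauchySeq_not_tendsto {X : Type*} [PseudoMetricSpace X]
    (hX : ¬CompleteSpace X) :
    ∃ w : ℕ → X, Function.Injective w ∧ CauchySeq w ∧ ∀ a, ¬Tendsto w atTop (𝓝 a) := by
  obtain ⟨u, hu, hlim⟩ : ∃ u : ℕ → X, CauchySeq u ∧ ∀ a, ¬Tendsto u atTop (𝓝 a) := by
    by_contra! h
    exact hX (Metric.complete_of_cauchySeq_tendsto h)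
  obtain ⟨φ, hφ, hw⟩ := exists_injective_comp_of_infinite_range (hu.infinite_range hlim)
  exact ⟨u ∘ φ, hw, hu.comp_tendsto hφ.nat_tendsto_atTop,
    hu.not_tendsto_comp hlim hφ.nat_tendsto_atTop⟩

section MetricSpace

variable {X : Type u} {Y : Type v} {Z : Type*} [MetricSpace X] [MetricSpace Y] [MetricSpace Z]

theorem Continuous.cauchyCont [CompleteSpace X] {f : X → Y} (hf : Continuous f) :
    CauchyCont f := fun _ hu =>
  let ⟨a, ha⟩ := cauchySeq_tendsto_of_complete hu
  ((hf.tendsto a).comp ha).cauchySeq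

theorem TBRegular.of_totallyBounded_range {f : X → Y} (hf : TotallyBounded (range f)) :
    TBRegular f := fun _ _ => hf.subset (image_subset_range _ _)

theorem TBRegular.comp {g : Y → Z} {f : X → Y} (hg : UniformContinuous g) (hf : TBRegular f) :
    TBRegular (g ∘ f) := fun A hA => by
  rw [image_comp]
  exact (hf A hA).image hg

theorem CauchyCont.comp {g : Y → Z} {f : X → Y} (hg : UniformContinuous g) (hf : CauchyCont f) :
    CauchyCont (g ∘ f) := fun u hu => hg.comp_cauchySeq (hf u hu)

theorem exists_continuous_not_cauchyCont_of_not_completeSpace (hX : ¬CompleteSpace X) :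
    ∃ F : X → ℝ, Continuous F ∧ range F ⊆ Icc 0 1 ∧ ¬CauchyCont F := by
  obtain ⟨w, hw, hwc, hlim⟩ := exists_injective_cauchySeq_not_tendsto hX
  have heven : Tendsto (fun k => 2 * k) atTop atTop :=
    tendsto_atTop_mono (fun k => show k ≤ _ by omega) tendsto_id
  have hodd : Tendsto (fun k => 2 * k + 1) atTop atTop :=
    tendsto_atTop_mono (fun k => show k ≤ _ by omega) tendsto_id
  have hclosed {φ : ℕ → ℕ} (hφ : Tendsto φ atTop atTop) : IsClosed (range (w ∘ φ)) :=
    (hwc.comp_tendsto hφ).isClosed_range (hwc.not_tendsto_comp hlim hφ)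
  have hdisj : Disjoint (range (w ∘ fun k => 2 * k)) (range (w ∘ fun k => 2 * k + 1)) := by
    rw [disjoint_iff_forall_ne]
    rintro _ ⟨i, rfl⟩ _ ⟨j, rfl⟩ hij
    have : 2 * i = 2 * j + 1 := hw hij
    omega
  obtain ⟨F, hF0, hF1, hF01⟩ := exists_continuous_zero_one_of_isClosed (hclosed heven)
    (hclosed hodd) hdisj
  refine ⟨F, F.continuous, range_subset_iff.2 hF01, fun hF => ?_⟩
  have h0 : Tendsto ((F ∘ w) ∘ fun k => 2 * k) atTop (𝓝 0) :=
    tendsto_const_nhds.congr fun k => (hF0 (mem_range_self k)).symm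
  have h1 : Tendsto ((F ∘ w) ∘ fun k => 2 * k + 1) atTop (𝓝 1) :=
    tendsto_const_nhds.congr fun k => (hF1 (mem_range_self k)).symm
  exact zero_ne_one ((hF w hwc).eq_of_tendsto_comp heven hodd h0 h1)

end MetricSpace

theorem complete_iff_continuous_tbRegular_cauchyCont {X : Type u} [MetricSpace X] :
    List.TFAE
      [CompleteSpace X,
       ∀ (Y : Type v) [MetricSpace Y] (f : X → Y), Continuous f → TBRegular f → CauchyCont f,
       ∀ f : X → ℝ, Continuous f → TBRegular f → CauchyCont f] := by
  tfae_have 1 → 2 := fun _ _ _ _ hf _ => hf.cauchyCont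
  tfae_have 2 → 3 := fun h f hf htb => by
    let e : ULift.{v} ℝ ≃ᵤ ℝ := UniformEquiv.ulift ℝ
    have := (h _ (e.symm ∘ f) (e.symm.continuous.comp hf)
      (htb.comp e.symm.uniformContinuous)).comp e.uniformContinuous
    rwa [← Function.comp_assoc, e.self_comp_symm, Function.id_comp] at this
  tfae_have 3 → 1 := fun h => by
    by_contra hX
    obtain ⟨F, hFc, hF01, hF⟩ := exists_continuous_not_cauchyCont_of_not_completeSpace hX
    exact hF (h F hFc (.of_totallyBounded_range ((totallyBounded_Icc 0 1).subset hF01)))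
  tfae_finish
end

section
/- Let (X,d) be a metric space. The following are equivalent: (a) (X,d) is complete; (b) each continuous TB-regular function from (X,d) to any Banach space (Y,‖·‖) can be uniformly approximated by Cauchy-Lipschitz functions, i.e., for every ε > 0 there exists a Cauchy-Lipschitz function g : X → Y with sup_{x ∈ X} ‖f(x) − g(x)‖ ≤ ε; (c) each real-valued continuous TB-regular function on (X,d) can be uniformly approximated by Cauchy-Lipschitz functions. -/
open Set Metric Filter Topology

universe u v

/-- `f` is Cauchy-Lipschitz if it is Lipschitz on the range of each Cauchy sequence. -/
def CauchyLip {X : Type u} {Y : Type v} [MetricSpace X] [MetricSpace Y] (f : X → Y) : Prop :=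
  ∀ u : ℕ → X, CauchySeq u → ∃ K : NNReal, LipschitzOnWith K f (Set.range u)


set_option maxHeartbeats 1000000 in
theorem exists_locLip_approx {X : Type u} {Y : Type v} [MetricSpace X]
    [NormedAddCommGroup Y] [NormedSpace ℝ Y]
    (f : X → Y) (hf : Continuous f) {ε : ℝ} (hε : 0 < ε) :
    ∃ g : X → Y, (∀ x₀ : X, ∃ ρ > (0:ℝ), ∃ K : NNReal, LipschitzOnWith K g (Metric.ball x₀ ρ)) ∧
      ∀ x, ‖f x - g x‖ ≤ ε := by
  classical
  -- oscillation cover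
  set U : X → Set X := fun c => f ⁻¹' Metric.ball (f c) (ε / 2) with hU
  have hUopen : ∀ c, IsOpen (U c) := fun c => (Metric.isOpen_ball).preimage hf
  have hUcov : ⋃ c, U c = univ := by
    refine eq_univ_of_forall fun x => mem_iUnion.2 ⟨x, ?_⟩
    exact Metric.mem_ball_self (half_pos hε)
  obtain ⟨V, hVopen, hVcov, hVlf, hVU⟩ := precise_refinement U hUopen hUcov
  -- bump functions
  set ψ : X → X → ℝ := fun c =>
    if h : ((V c)ᶜ : Set X).Nonempty then fun z => Metric.infDist z (V c)ᶜ else fun _ => 1 with hψ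
  have hψ_lip : ∀ c, LipschitzWith 1 (ψ c) := by
    intro c; rw [hψ]; dsimp only
    split_ifs with h
    · exact Metric.lipschitz_infDist_pt _
    · exact LipschitzWith.const' 1
  have hψ_nonneg : ∀ c z, 0 ≤ ψ c z := by
    intro c z; rw [hψ]; dsimp only
    split_ifs with h
    · exact Metric.infDist_nonneg
    · norm_num
  have hψ_supp : ∀ c z, ψ c z ≠ 0 → z ∈ V c := by
    intro c z hne
    by_contra hz
    apply hne
    rw [hψ]; dsimp only
    have h : ((V c)ᶜ : Set X).Nonempty := ⟨z, hz⟩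
    rw [dif_pos h]
    exact Metric.infDist_zero_of_mem hz
  have hψ_pos : ∀ c z, z ∈ V c → 0 < ψ c z := by
    intro c z hz
    rw [hψ]; dsimp only
    split_ifs with h
    · exact ((hVopen c).isClosed_compl.notMem_iff_infDist_pos h).1 (by simpa using hz)
    · norm_num
  -- pointwise finite index sets
  have hpt : ∀ z : X, {c : X | z ∈ V c}.Finite := hVlf.point_finite
  set F : X → Finset X := fun z => (hpt z).toFinset with hF
  have hmemF : ∀ z c, c ∈ F z ↔ z ∈ V c := by
    intro z c; rw [hF]; exact (hpt z).mem_toFinset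
  set den : X → ℝ := fun z => ∑ c ∈ F z, ψ c z with hden
  set num : X → Y := fun z => ∑ c ∈ F z, ψ c z • f c with hnum
  -- sums are stable under enlarging the index set
  have hden_eq : ∀ z (G : Finset X), F z ⊆ G → den z = ∑ c ∈ G, ψ c z := by
    intro z G hFG
    refine Finset.sum_subset hFG fun c _ hc => ?_
    by_contra hne
    exact hc ((hmemF z c).2 (hψ_supp c z hne))
  have hnum_eq : ∀ z (G : Finset X), F z ⊆ G → num z = ∑ c ∈ G, ψ c z • f c := by
    intro z G hFG
    refine Finset.sum_subset hFG fun c _ hc => ?_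
    have : ψ c z = 0 := by
      by_contra hne
      exact hc ((hmemF z c).2 (hψ_supp c z hne))
    simp [this]
  have hden_pos : ∀ z, 0 < den z := by
    intro z
    obtain ⟨c₀, hc₀⟩ : ∃ c, z ∈ V c := by
      have := hVcov ▸ mem_univ z
      simpa only [mem_iUnion] using (hVcov.symm ▸ mem_univ z : z ∈ ⋃ c, V c)
    refine Finset.sum_pos' (fun c _ => hψ_nonneg c z) ⟨c₀, (hmemF z c₀).2 hc₀, hψ_pos c₀ z hc₀⟩
  set g : X → Y := fun z => (den z)⁻¹ • num z with hg
  refine ⟨g, ?_, ?_⟩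
  · -- local Lipschitz property
    intro z0
    obtain ⟨W, hWnhds, hWfin⟩ := hVlf z0
    obtain ⟨ρ1, hρ1, hball⟩ := Metric.mem_nhds_iff.1 hWnhds
    set G : Finset X := hWfin.toFinset with hG
    have hFG : ∀ z ∈ Metric.ball z0 ρ1, F z ⊆ G := by
      intro z hz c hc
      rw [hG, Set.Finite.mem_toFinset]
      exact ⟨z, (hmemF z c).1 hc, hball hz⟩
    set D : X → ℝ := fun z => ∑ c ∈ G, ψ c z with hD
    set N : X → Y := fun z => ∑ c ∈ G, ψ c z • f c with hN
    set CG : ℝ := (G.card : ℝ) with hCG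
    set CN : ℝ := ∑ c ∈ G, ‖f c‖ with hCN
    have hCG0 : 0 ≤ CG := by positivity
    have hCN0 : 0 ≤ CN := by positivity
    have hDlip : ∀ a b : X, |D a - D b| ≤ CG * dist a b := by
      intro a b
      rw [hD]; dsimp only
      rw [← Finset.sum_sub_distrib]
      refine (Finset.abs_sum_le_sum_abs _ _).trans ?_
      have : ∀ c ∈ G, |ψ c a - ψ c b| ≤ dist a b := by
        intro c _
        simpa [Real.dist_eq] using (hψ_lip c).dist_le_mul a b
      calc ∑ c ∈ G, |ψ c a - ψ c b| ≤ ∑ _c ∈ G, dist a b := Finset.sum_le_sum this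
        _ = CG * dist a b := by rw [Finset.sum_const, nsmul_eq_mul, hCG]
    have hNlip : ∀ a b : X, ‖N a - N b‖ ≤ CN * dist a b := by
      intro a b
      rw [hN]; dsimp only
      rw [← Finset.sum_sub_distrib]
      have heq : ∀ c ∈ G, ψ c a • f c - ψ c b • f c = (ψ c a - ψ c b) • f c := by
        intro c _; rw [sub_smul]
      rw [Finset.sum_congr rfl heq]
      refine (norm_sum_le _ _).trans ?_
      have hterm : ∀ c ∈ G, ‖(ψ c a - ψ c b) • f c‖ ≤ dist a b * ‖f c‖ := by
        intro c _
        rw [norm_smul, Real.norm_eq_abs]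
        have habs : |ψ c a - ψ c b| ≤ dist a b := by
          simpa [Real.dist_eq] using (hψ_lip c).dist_le_mul a b
        exact mul_le_mul_of_nonneg_right habs (norm_nonneg _)
      refine (Finset.sum_le_sum hterm).trans ?_
      rw [← Finset.mul_sum, mul_comm]
    set δ0 : ℝ := D z0 with hδ0
    have hδ0pos : 0 < δ0 := by
      have : den z0 = D z0 := hden_eq z0 G (hFG z0 (Metric.mem_ball_self hρ1))
      rw [hδ0, ← this]; exact hden_pos z0
    set ρ : ℝ := min ρ1 (δ0 / (2 * (CG + 1))) with hρdef
    have hρpos : 0 < ρ := lt_min hρ1 (by positivity)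
    have hρle : ρ ≤ ρ1 := min_le_left _ _
    have hsub : Metric.ball z0 ρ ⊆ Metric.ball z0 ρ1 := Metric.ball_subset_ball hρle
    have hDlow : ∀ z ∈ Metric.ball z0 ρ, δ0 / 2 ≤ D z := by
      intro z hz
      have hd : dist z z0 < ρ := Metric.mem_ball.1 hz
      have h1 : |D z - D z0| ≤ CG * dist z z0 := hDlip z z0
      have h2 : CG * dist z z0 ≤ CG * ρ := by
        refine mul_le_mul_of_nonneg_left hd.le hCG0
      have h3 : CG * ρ ≤ δ0 / 2 := by
        have hρle2 : ρ ≤ δ0 / (2 * (CG + 1)) := min_le_right _ _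
        have : CG * ρ ≤ CG * (δ0 / (2 * (CG + 1))) := mul_le_mul_of_nonneg_left hρle2 hCG0
        refine this.trans ?_
        rw [mul_div_assoc', div_le_div_iff₀ (by positivity) (by norm_num : (0:ℝ) < 2)]
        nlinarith [hδ0pos.le, hCG0]
      have := abs_sub_abs_le_abs_sub (D z) (D z0)
      have habs : |D z - D z0| ≤ δ0 / 2 := h1.trans (h2.trans h3)
      have := abs_le.1 habs
      linarith [this.1]
    have hdenD : ∀ z ∈ Metric.ball z0 ρ, den z = D z := fun z hz =>
      hden_eq z G (hFG z (hsub hz))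
    have hnumN : ∀ z ∈ Metric.ball z0 ρ, num z = N z := fun z hz =>
      hnum_eq z G (hFG z (hsub hz))
    set MN : ℝ := ‖N z0‖ + CN * ρ with hMN
    have hMN0 : 0 ≤ MN := by positivity
    have hNbound : ∀ z ∈ Metric.ball z0 ρ, ‖N z‖ ≤ MN := by
      intro z hz
      have h1 : ‖N z - N z0‖ ≤ CN * dist z z0 := hNlip z z0
      have h2 : CN * dist z z0 ≤ CN * ρ :=
        mul_le_mul_of_nonneg_left (Metric.mem_ball.1 hz).le hCN0
      calc ‖N z‖ ≤ ‖N z0‖ + ‖N z - N z0‖ := by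
            have := norm_sub_norm_le (N z) (N z0); linarith [abs_le.1 (abs_norm_sub_norm_le (N z) (N z0))]
        _ ≤ MN := by rw [hMN]; linarith
    set Kr : ℝ := (2 / δ0) * CN + 4 * CG * MN / δ0 ^ 2 with hKr
    refine ⟨ρ, hρpos, Real.toNNReal Kr, LipschitzOnWith.of_dist_le_mul fun a ha b hb => ?_⟩
    have hDa := hDlow a ha; have hDb := hDlow b hb
    have hDa0 : 0 < D a := lt_of_lt_of_le (by linarith) hDa
    have hDb0 : 0 < D b := lt_of_lt_of_le (by linarith) hDb
    have hga : g a = (D a)⁻¹ • N a := by rw [hg]; dsimp only; rw [hdenD a ha, hnumN a ha]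
    have hgb : g b = (D b)⁻¹ • N b := by rw [hg]; dsimp only; rw [hdenD b hb, hnumN b hb]
    rw [dist_eq_norm, hga, hgb]
    have hsplit : (D a)⁻¹ • N a - (D b)⁻¹ • N b
        = (D a)⁻¹ • (N a - N b) + ((D a)⁻¹ - (D b)⁻¹) • N b := by
      rw [smul_sub, sub_smul]; abel
    rw [hsplit]
    have h1 : ‖(D a)⁻¹ • (N a - N b)‖ ≤ (2 / δ0) * (CN * dist a b) := by
      rw [norm_smul, Real.norm_eq_abs, abs_of_pos (inv_pos.2 hDa0)]
      have hinv : (D a)⁻¹ ≤ 2 / δ0 := by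
        rw [inv_le_comm₀ hDa0 (by positivity)]
        have h25 : (2 / δ0)⁻¹ = δ0 / 2 := by
          field_simp
        rw [h25]
        exact hDa
      exact mul_le_mul hinv (hNlip a b) (norm_nonneg _) (by positivity)
    have h2 : ‖((D a)⁻¹ - (D b)⁻¹) • N b‖ ≤ (4 * CG * MN / δ0 ^ 2) * dist a b := by
      rw [norm_smul, Real.norm_eq_abs]
      have hdiff : (D a)⁻¹ - (D b)⁻¹ = (D b - D a) / (D a * D b) := by
        field_simp
      have habs : |(D a)⁻¹ - (D b)⁻¹| ≤ (CG * dist a b) / (δ0 / 2 * (δ0 / 2)) := by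
        rw [hdiff, abs_div, abs_of_pos (by positivity : (0:ℝ) < D a * D b)]
        apply div_le_div₀ (by positivity)
        · have : |D b - D a| = |D a - D b| := abs_sub_comm _ _
          rw [this]; exact hDlip a b
        · positivity
        · exact mul_le_mul hDa hDb (by positivity) (by positivity)
      have : |(D a)⁻¹ - (D b)⁻¹| * ‖N b‖ ≤ (CG * dist a b) / (δ0 / 2 * (δ0 / 2)) * MN := by
        exact mul_le_mul habs (hNbound b hb) (norm_nonneg _) (by positivity)
      refine this.trans (le_of_eq ?_)
      field_simp
      ring
    calc ‖(D a)⁻¹ • (N a - N b) + ((D a)⁻¹ - (D b)⁻¹) • N b‖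
        ≤ ‖(D a)⁻¹ • (N a - N b)‖ + ‖((D a)⁻¹ - (D b)⁻¹) • N b‖ := norm_add_le _ _
      _ ≤ (2 / δ0) * (CN * dist a b) + (4 * CG * MN / δ0 ^ 2) * dist a b := add_le_add h1 h2
      _ = Kr * dist a b := by rw [hKr]; ring
      _ ≤ Real.toNNReal Kr * dist a b := by
          refine mul_le_mul_of_nonneg_right (Real.le_coe_toNNReal Kr) dist_nonneg
  · -- approximation
    intro z
    have hden0 : den z ≠ 0 := (hden_pos z).ne'
    have key : den z • (f z - g z) = ∑ c ∈ F z, ψ c z • (f z - f c) := by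
      rw [hg]; dsimp only
      rw [smul_sub, smul_inv_smul₀ hden0, hden, hnum]
      dsimp only
      rw [Finset.sum_smul, ← Finset.sum_sub_distrib]
      refine Finset.sum_congr rfl fun c _ => ?_
      rw [smul_sub]
    have hbound : ‖∑ c ∈ F z, ψ c z • (f z - f c)‖ ≤ den z * ε := by
      refine (norm_sum_le _ _).trans ?_
      have hterm : ∀ c ∈ F z, ‖ψ c z • (f z - f c)‖ ≤ ψ c z * ε := by
        intro c hc
        rw [norm_smul, Real.norm_eq_abs, abs_of_nonneg (hψ_nonneg c z)]
        rcases eq_or_ne (ψ c z) 0 with h0 | h0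
        · simp [h0]
        · refine mul_le_mul_of_nonneg_left ?_ (hψ_nonneg c z)
          have hzV : z ∈ V c := hψ_supp c z h0
          have hzU : z ∈ U c := hVU c hzV
          have : dist (f z) (f c) < ε / 2 := by
            rw [hU] at hzU; simpa [Metric.mem_ball] using hzU
          rw [← dist_eq_norm]
          linarith
      refine (Finset.sum_le_sum hterm).trans ?_
      rw [← Finset.sum_mul, hden]
    have : den z * ‖f z - g z‖ ≤ den z * ε := by
      have := key ▸ hbound
      rwa [norm_smul, Real.norm_eq_abs, abs_of_pos (hden_pos z)] at this
    exact le_of_mul_le_mul_left this (hden_pos z)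


theorem lipschitzOnWith_of_locally {X : Type u} {Y : Type v} [MetricSpace X] [MetricSpace Y]
    (g : X → Y)
    (hg : ∀ x₀ : X, ∃ ρ > (0:ℝ), ∃ K : NNReal, LipschitzOnWith K g (Metric.ball x₀ ρ))
    {s : Set X} (hs : IsCompact s) : ∃ K : NNReal, LipschitzOnWith K g s := by
  rcases s.eq_empty_or_nonempty with rfl | ⟨x₀s, hx₀s⟩
  · exact ⟨1, by simp [LipschitzOnWith]⟩
  choose r hr K hK using hg
  obtain ⟨t, hts, hcov⟩ := hs.elim_nhds_subcover (fun x => Metric.ball x (r x / 2))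
    (fun x _ => Metric.ball_mem_nhds x (half_pos (hr x)))
  have htne : t.Nonempty := by
    obtain ⟨x, hx⟩ := mem_iUnion₂.1 (hcov hx₀s)
    exact ⟨x, hx.1⟩
  set δ : ℝ := t.inf' htne (fun x => r x / 2) with hδ
  have hδpos : 0 < δ := by
    rw [hδ, Finset.lt_inf'_iff]
    exact fun x _ => half_pos (hr x)
  set Kmax : ℝ := t.sup' htne (fun x => (K x : ℝ)) with hKmax
  have htne2 := htne
  obtain ⟨c₀, hc₀⟩ := htne2
  set M : ℝ := t.sup' htne (fun x => dist (g x) (g c₀) + K x * r x) with hM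
  have hM0 : 0 ≤ M := by
    refine le_trans ?_ (Finset.le_sup' (fun x => dist (g x) (g c₀) + K x * r x) hc₀)
    have h1 : (0:ℝ) ≤ dist (g c₀) (g c₀) := dist_nonneg
    have h2 : (0:ℝ) ≤ (K c₀ : ℝ) * r c₀ := mul_nonneg (K c₀).coe_nonneg (hr c₀).le
    linarith
  -- every point of s is near a center with controlled g-value
  have hnear : ∀ a ∈ s, ∃ x ∈ t, a ∈ Metric.ball x (r x / 2) := by
    intro a ha
    obtain ⟨x, hx, hax⟩ := mem_iUnion₂.1 (hcov ha)
    exact ⟨x, hx, hax⟩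
  have hbound : ∀ a ∈ s, dist (g a) (g c₀) ≤ M := by
    intro a ha
    obtain ⟨x, hxt, hax⟩ := hnear a ha
    have hax' : a ∈ Metric.ball x (r x) :=
      Metric.ball_subset_ball (by linarith [hr x]) hax
    have hx' : x ∈ Metric.ball x (r x) := Metric.mem_ball_self (hr x)
    have h1 : dist (g a) (g x) ≤ K x * dist a x := (hK x).dist_le_mul a hax' x hx'
    have h2 : dist a x ≤ r x := le_of_lt (by simpa [Metric.mem_ball] using hax')
    have h3 : dist (g a) (g x) ≤ K x * r x :=
      h1.trans (mul_le_mul_of_nonneg_left h2 (K x).coe_nonneg)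
    calc dist (g a) (g c₀) ≤ dist (g a) (g x) + dist (g x) (g c₀) := dist_triangle _ _ _
      _ ≤ dist (g x) (g c₀) + K x * r x := by linarith
      _ ≤ M := Finset.le_sup' (fun x => dist (g x) (g c₀) + (K x : ℝ) * r x) hxt
  refine ⟨Real.toNNReal (max Kmax (2 * M / δ)), LipschitzOnWith.of_dist_le_mul fun a ha b hb => ?_⟩
  have hfinal : dist (g a) (g b) ≤ max Kmax (2 * M / δ) * dist a b := by
    rcases lt_or_ge (dist a b) δ with hlt | hge
    · obtain ⟨x, hxt, hax⟩ := hnear a ha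
      have hδx : δ ≤ r x / 2 := Finset.inf'_le _ hxt
      have hax' : a ∈ Metric.ball x (r x) :=
        Metric.ball_subset_ball (by linarith [hr x]) hax
      have hbx : b ∈ Metric.ball x (r x) := by
        rw [Metric.mem_ball] at hax ⊢
        calc dist b x ≤ dist b a + dist a x := dist_triangle _ _ _
          _ < δ + r x / 2 := by rw [dist_comm b a]; exact add_lt_add_of_lt_of_le hlt hax.le
          _ ≤ r x := by linarith
      have h1 : dist (g a) (g b) ≤ K x * dist a b := (hK x).dist_le_mul a hax' b hbx
      have h2 : (K x : ℝ) ≤ Kmax := Finset.le_sup' (fun x => (K x : ℝ)) hxt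
      calc dist (g a) (g b) ≤ K x * dist a b := h1
        _ ≤ Kmax * dist a b := mul_le_mul_of_nonneg_right h2 dist_nonneg
        _ ≤ max Kmax (2 * M / δ) * dist a b :=
            mul_le_mul_of_nonneg_right (le_max_left _ _) dist_nonneg
    · have h1 : dist (g a) (g b) ≤ 2 * M := by
        calc dist (g a) (g b) ≤ dist (g a) (g c₀) + dist (g b) (g c₀) := dist_triangle_right _ _ _
          _ ≤ 2 * M := by linarith [hbound a ha, hbound b hb]
      have h2 : 2 * M = (2 * M / δ) * δ := by field_simp
      calc dist (g a) (g b) ≤ 2 * M := h1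
        _ = (2 * M / δ) * δ := h2
        _ ≤ (2 * M / δ) * dist a b := mul_le_mul_of_nonneg_left hge (by positivity)
        _ ≤ max Kmax (2 * M / δ) * dist a b :=
            mul_le_mul_of_nonneg_right (le_max_right _ _) dist_nonneg
  refine hfinal.trans (mul_le_mul_of_nonneg_right (Real.le_coe_toNNReal _) dist_nonneg)


theorem complete_of_cond3 {X : Type u} [MetricSpace X]
    (h3 : ∀ f : X → ℝ, Continuous f → TBRegular f →
      ∀ ε > (0 : ℝ), ∃ g : X → ℝ, CauchyLip g ∧ ∀ x : X, |f x - g x| ≤ ε) :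
    CompleteSpace X := by
  refine Metric.complete_of_cauchySeq_tendsto fun u hu => ?_
  by_contra hno
  push_neg at hno
  set c : X → UniformSpace.Completion X := ((↑) : X → UniformSpace.Completion X) with hc
  have hiso : Isometry c := UniformSpace.Completion.coe_isometry
  have hcu : CauchySeq (fun n => c (u n)) := hu.map hiso.uniformContinuous
  obtain ⟨p, hp⟩ := cauchySeq_tendsto_of_complete hcu
  have hdisttend : Tendsto (fun n => dist (c (u n)) p) atTop (𝓝 0) :=
    tendsto_iff_dist_tendsto_zero.1 hp
  have hpnot : ∀ x : X, c x ≠ p := by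
    intro x hx
    apply hno x
    refine tendsto_iff_dist_tendsto_zero.2 ?_
    have heq : (fun n => dist (u n) x) = fun n => dist (c (u n)) p := by
      funext n; rw [← hx, hiso.dist_eq]
    rw [heq]; exact hdisttend
  set φ : X → ℝ := fun x => dist (c x) p with hφ
  have hφpos : ∀ x, 0 < φ x := fun x => dist_pos.2 (hpnot x)
  have hφcont : Continuous φ :=
    (UniformSpace.Completion.continuous_coe X).dist continuous_const
  have hφu : Tendsto (fun n => φ (u n)) atTop (𝓝 0) := hdisttend
  have hex : ∀ N : ℕ, ∀ δ : ℝ, 0 < δ → ∃ m, N < m ∧ φ (u m) < δ := by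
    intro N δ hδ
    have h1 : ∀ᶠ m in atTop, φ (u m) < δ := hφu.eventually (gt_mem_nhds hδ)
    exact ((eventually_gt_atTop N).and h1).exists
  obtain ⟨n, hn⟩ : ∃ n : ℕ → ℕ, ∀ k, n k < n (k + 1) ∧ φ (u (n (k + 1))) < φ (u (n k)) := by
    refine ⟨fun k => Nat.rec 0 (fun _ nk => (hex nk (φ (u nk)) (hφpos _)).choose) k, fun k => ?_⟩
    exact ⟨(hex _ _ (hφpos _)).choose_spec.1, (hex _ _ (hφpos _)).choose_spec.2⟩
  have hmono : StrictMono n := strictMono_nat_of_lt_succ fun k => (hn k).1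
  set v : ℕ → X := fun k => u (n k) with hv
  set t : ℕ → ℝ := fun k => φ (v k) with ht
  have htanti : StrictAnti t := strictAnti_nat_of_succ_lt fun k => (hn k).2
  have htpos : ∀ k, 0 < t k := fun k => hφpos _
  have hvC : CauchySeq v := hu.comp_tendsto hmono.tendsto_atTop
  have htlim : Tendsto t atTop (𝓝 0) := hφu.comp hmono.tendsto_atTop
  have h2mono : StrictMono (fun k : ℕ => 2 * k) := by intro a b hab; dsimp only; omega
  have h2mono' : StrictMono (fun k : ℕ => 2 * k + 1) := by intro a b hab; dsimp only; omega
  have hSAcomp : IsCompact (insert (0:ℝ) (Set.range fun k => t (2 * k))) := by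
    have : Tendsto (fun k => t (2 * k)) cofinite (𝓝 0) := by
      rw [Nat.cofinite_eq_atTop]
      exact htlim.comp h2mono.tendsto_atTop
    exact this.isCompact_insert_range_of_cofinite
  have hSBcomp : IsCompact (insert (0:ℝ) (Set.range fun k => t (2 * k + 1))) := by
    have : Tendsto (fun k => t (2 * k + 1)) cofinite (𝓝 0) := by
      rw [Nat.cofinite_eq_atTop]
      exact htlim.comp h2mono'.tendsto_atTop
    exact this.isCompact_insert_range_of_cofinite
  set A : Set X := φ ⁻¹' (insert (0:ℝ) (Set.range fun k => t (2 * k))) with hA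
  set B : Set X := φ ⁻¹' (insert (0:ℝ) (Set.range fun k => t (2 * k + 1))) with hB
  have hAclosed : IsClosed A := hSAcomp.isClosed.preimage hφcont
  have hBclosed : IsClosed B := hSBcomp.isClosed.preimage hφcont
  have hdisj : Disjoint A B := by
    rw [Set.disjoint_left]
    intro x hxA hxB
    rw [hA, Set.mem_preimage, Set.mem_insert_iff] at hxA
    rw [hB, Set.mem_preimage, Set.mem_insert_iff] at hxB
    rcases hxA with h0 | ⟨k, hk⟩
    · exact absurd h0 (hφpos x).ne'
    rcases hxB with h0 | ⟨j, hj⟩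
    · exact absurd h0 (hφpos x).ne'
    have : t (2 * k) = t (2 * j + 1) := by
      have hk' : t (2 * k) = φ x := hk
      have hj' : t (2 * j + 1) = φ x := hj
      rw [hk', hj']
    have := htanti.injective this
    omega
  obtain ⟨F, hF0, hF1, hF01⟩ := exists_continuous_zero_one_of_isClosed hAclosed hBclosed hdisj
  have htb : TBRegular (F : X → ℝ) := by
    intro s _
    refine TotallyBounded.subset ?_ (totallyBounded_Icc (0:ℝ) 1)
    rintro _ ⟨x, _, rfl⟩
    exact hF01 x
  obtain ⟨g, hgCL, hg⟩ := h3 F F.continuous htb (1/4) (by norm_num)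
  obtain ⟨K, hK⟩ := hgCL v hvC
  have hgvC : CauchySeq fun k => g (v k) := by
    rw [Metric.cauchySeq_iff]
    intro ε hε
    obtain ⟨N, hN⟩ := Metric.cauchySeq_iff.1 hvC (ε / (K + 1)) (by positivity)
    refine ⟨N, fun m hm k hk => ?_⟩
    have h1 : dist (g (v m)) (g (v k)) ≤ K * dist (v m) (v k) :=
      hK.dist_le_mul (v m) ⟨m, rfl⟩ (v k) ⟨k, rfl⟩
    have h2 := hN m hm k hk
    have hK0 : (0:ℝ) ≤ K := K.coe_nonneg
    have hq : (K : ℝ) / (K + 1) < 1 := (div_lt_one (by positivity)).2 (by linarith)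
    calc dist (g (v m)) (g (v k)) ≤ K * dist (v m) (v k) := h1
      _ ≤ K * (ε / (K + 1)) := mul_le_mul_of_nonneg_left h2.le hK0
      _ = ε * ((K : ℝ) / (K + 1)) := by ring
      _ < ε * 1 := mul_lt_mul_of_pos_left hq hε
      _ = ε := mul_one ε
  obtain ⟨L, hL⟩ := cauchySeq_tendsto_of_complete hgvC
  obtain ⟨N, hN⟩ := Metric.tendsto_atTop.1 hL (1/8) (by norm_num)
  have hvA : v (2 * N) ∈ A := by
    rw [hA, Set.mem_preimage]
    exact Set.mem_insert_iff.2 (Or.inr ⟨N, rfl⟩)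
  have hvB : v (2 * N + 1) ∈ B := by
    rw [hB, Set.mem_preimage]
    exact Set.mem_insert_iff.2 (Or.inr ⟨N, rfl⟩)
  have f0 : F (v (2 * N)) = 0 := by simpa using hF0 hvA
  have f1 : F (v (2 * N + 1)) = 1 := by simpa using hF1 hvB
  have hga := hg (v (2 * N))
  have hgb := hg (v (2 * N + 1))
  rw [f0] at hga
  rw [f1] at hgb
  have hLa := hN (2 * N) (by omega)
  have hLb := hN (2 * N + 1) (by omega)
  rw [Real.dist_eq] at hLa hLb
  have h1 := abs_le.1 hga
  have h2 := abs_le.1 hgb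
  have h3a := abs_le.1 hLa.le
  have h4 := abs_le.1 hLb.le
  linarith [h1.1, h1.2, h2.1, h2.2, h3a.1, h3a.2, h4.1, h4.2]


theorem complete_iff_approx_by_cauchyLip {X : Type u} [MetricSpace X] :
    List.TFAE
      [CompleteSpace X,
       ∀ (Y : Type v) [NormedAddCommGroup Y] [NormedSpace ℝ Y] [CompleteSpace Y] (f : X → Y),
         Continuous f → TBRegular f →
           ∀ ε > (0 : ℝ), ∃ g : X → Y, CauchyLip g ∧ ∀ x : X, ‖f x - g x‖ ≤ ε,
       ∀ f : X → ℝ, Continuous f → TBRegular f →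
         ∀ ε > (0 : ℝ), ∃ g : X → ℝ, CauchyLip g ∧ ∀ x : X, |f x - g x| ≤ ε] := by
  tfae_have 1 → 2 := by
    intro h1 Y _ _ _ f hf _ ε hε
    obtain ⟨g, hloc, happrox⟩ := exists_locLip_approx f hf hε
    refine ⟨g, ?_, fun x => happrox x⟩
    intro u hu
    obtain ⟨x0, hx0⟩ := cauchySeq_tendsto_of_complete hu
    have hcomp : IsCompact (insert x0 (Set.range u)) := by
      have hcof : Filter.Tendsto u Filter.cofinite (nhds x0) := by
        rw [Nat.cofinite_eq_atTop]; exact hx0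
      exact hcof.isCompact_insert_range_of_cofinite
    obtain ⟨K, hK⟩ := lipschitzOnWith_of_locally g hloc hcomp
    exact ⟨K, hK.mono (Set.subset_insert _ _)⟩
  tfae_have 2 → 3 := by
    intro h2 f hf htb ε hε
    have hup : Isometry (ULift.up : ℝ → ULift.{v} ℝ) := by
      refine Isometry.of_dist_eq fun a b => ?_
      rw [dist_eq_norm, dist_eq_norm, ULift.norm_def, Real.norm_eq_abs]
      rfl
    have hdown : Isometry (ULift.down : ULift.{v} ℝ → ℝ) := by
      refine Isometry.of_dist_eq fun a b => ?_
      rw [dist_eq_norm, dist_eq_norm, ULift.norm_def]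
      norm_num
    obtain ⟨g', hg'CL, hg'⟩ := h2 (ULift.{v} ℝ) (fun x => ULift.up (f x))
      (hup.continuous.comp hf)
      (by
        intro A hA
        have himg : (fun x => ULift.up (f x)) '' A = ULift.up '' (f '' A) := by
          rw [Set.image_image]
        rw [himg]
        exact (htb A hA).image hup.uniformContinuous) ε hε
    refine ⟨fun x => (g' x).down, ?_, ?_⟩
    · intro u hu
      obtain ⟨K, hK⟩ := hg'CL u hu
      exact ⟨1 * K, (hdown.lipschitz).comp_lipschitzOnWith hK⟩
    · intro x
      have := hg' x
      rwa [ULift.norm_def, Real.norm_eq_abs] at this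
  tfae_have 3 → 1 := complete_of_cond3
  tfae_finish
end

section
/- Let f : (X,d) → (Y,ρ) be a function between metric spaces. The following are equivalent: (a) f is Cauchy continuous; (b) f is TB-regular and the family of subsets of X on which f is Cauchy continuous is closed under finite unions; (c) f is TB-regular and the family of subsets of X on which f is Cauchy continuous forms a bornology (covers X, is hereditary under inclusion of subsets, and is closed under finite unions). -/
/-!
A Cauchy continuous map sends sequences with Cauchy subsequences to such sequences, so it
preserves total boundedness. Conversely, let `f` be TB-regular with the union property and `u`
Cauchy. As `f (range u)` is totally bounded, it suffices that any two subsequences `u ∘ k₁`,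
`u ∘ k₂` with Cauchy images have asymptotically equal images. If a Cauchy sequence `a` with
`f ∘ a` Cauchy does not converge to one of its own terms, then `f` is Cauchy continuous on
`range a`: a Cauchy sequence in `range a` either follows `a` with indices tending to infinity or
is eventually constant. Interleaving the two subsequences gives a Cauchy sequence in the union of
two such ranges (or, when `u` converges to `p`, of such a range and `{p}`), on which `f` is Cauchy
continuous, so the two image sequences come together.
-/

universe u v

/-- `f` is Cauchy continuous on `B` if it maps Cauchy sequences contained in `B` to Cauchy
sequences. -/
def CauchyContOn {X : Type u} {Y : Type v} [MetricSpace X] [MetricSpace Y]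
    (f : X → Y) (B : Set X) : Prop :=
  ∀ u : ℕ → X, (∀ n, u n ∈ B) → CauchySeq u → CauchySeq (f ∘ u)

/-- A family of nonempty subsets of `X` is a bornology if it covers `X`, is hereditary
(closed under taking nonempty subsets) and is closed under finite unions. -/
def IsBornologyFam {X : Type u} (𝓑 : Set (Set X)) : Prop :=
  (∀ x : X, ∃ B ∈ 𝓑, x ∈ B) ∧
  (∀ A B : Set X, B ∈ 𝓑 → A ⊆ B → A.Nonempty → A ∈ 𝓑) ∧
  (∀ A B : Set X, A ∈ 𝓑 → B ∈ 𝓑 → A ∪ B ∈ 𝓑)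

open Filter Set Topology

def interleave {α : Type*} (a b : ℕ → α) (n : ℕ) : α :=
  if Even n then a (n / 2) else b (n / 2)

section Interleave

variable {α β : Type*} (a b : ℕ → α)

@[simp]
theorem interleave_two_mul (n : ℕ) : interleave a b (2 * n) = a n := by
  simp [interleave]

@[simp]
theorem interleave_two_mul_add_one (n : ℕ) : interleave a b (2 * n + 1) = b n := by
  simp [interleave, Nat.add_div_of_dvd_right]

theorem comp_interleave (g : α → β) : g ∘ interleave a b = interleave (g ∘ a) (g ∘ b) := by
  funext n
  simp only [interleave, Function.comp_apply]
  split_ifs <;> rfl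

variable {a b}

theorem interleave_mem {S : Set α} (ha : ∀ n, a n ∈ S) (hb : ∀ n, b n ∈ S) (n : ℕ) :
    interleave a b n ∈ S := by
  unfold interleave
  split_ifs
  exacts [ha _, hb _]

theorem dist_interleave_le [PseudoMetricSpace α] (n : ℕ) :
    dist (interleave a b n) (a (n / 2)) ≤ dist (a (n / 2)) (b (n / 2)) := by
  unfold interleave
  split_ifs
  · simp
  · rw [dist_comm]

theorem CauchySeq.interleave [PseudoMetricSpace α] (ha : CauchySeq a)
    (hab : Tendsto (fun n ↦ dist (a n) (b n)) atTop (𝓝 0)) : CauchySeq (interleave a b) := by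
  rw [Metric.cauchySeq_iff']
  intro ε hε
  obtain ⟨N₀, hN₀⟩ := Metric.cauchySeq_iff.1 ha (ε / 2) (half_pos hε)
  obtain ⟨N, hN⟩ := eventually_atTop.1
    ((eventually_ge_atTop N₀).and (hab.eventually (gt_mem_nhds (half_pos hε))))
  refine ⟨2 * N, fun n hn ↦ ?_⟩
  have hn' : N ≤ n / 2 := by omega
  calc dist (_root_.interleave a b n) (_root_.interleave a b (2 * N))
      ≤ dist (_root_.interleave a b n) (a (n / 2)) + dist (a (n / 2)) (a N) := by
        rw [interleave_two_mul]; exact dist_triangle _ _ _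
    _ < ε / 2 + ε / 2 := by
        gcongr
        · exact (dist_interleave_le n).trans_lt (hN _ hn').2
        · exact hN₀ _ ((hN _ hn').1) _ (hN N le_rfl).1
    _ = ε := add_halves ε

end Interleave

theorem totallyBounded_of_forall_exists_subseq_cauchySeq {α : Type*} [UniformSpace α] {s : Set α}
    (h : ∀ u : ℕ → α, (∀ n, u n ∈ s) → ∃ φ : ℕ → ℕ, StrictMono φ ∧ CauchySeq (u ∘ φ)) :
    TotallyBounded s := by
  intro V hV
  contrapose! h
  obtain ⟨u, hus, hu⟩ : ∃ u : ℕ → α, (∀ n, u n ∈ s) ∧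
      ∀ n m, m < n → u m ∉ UniformSpace.ball (u n) V := by
    simp only [not_subset, mem_iUnion₂, not_exists, exists_prop] at h
    simpa only [forall_and, forall_mem_image, not_and] using! seq_of_forall_finite_exists h
  refine ⟨u, hus, fun φ hφ hcauchy ↦ ?_⟩
  obtain ⟨N, hN⟩ := hcauchy.mem_entourage hV
  exact hu (φ (N + 1)) (φ N) (hφ N.lt_add_one) (hN (N + 1) N N.le_succ le_rfl)

theorem Filter.Tendsto.eventually_eq_of_eventually_mem_finite {α ι : Type*} [TopologicalSpace α]
    [T1Space α] {l : Filter ι} {v : ι → α} {x : α} {F : Set α} (hF : F.Finite)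
    (hv : Tendsto v l (𝓝 x)) (hvF : ∀ᶠ i in l, v i ∈ F) : ∀ᶠ i in l, v i = x := by
  have hx : (F \ {x})ᶜ ∈ 𝓝 x :=
    ((hF.sdiff (t := {x})).isClosed.isOpen_compl).mem_nhds fun hx ↦ hx.2 rfl
  filter_upwards [hvF, hv hx] with i hiF hix
  by_contra hne
  exact hix ⟨hiF, hne⟩

section PseudoMetric

variable {α : Type*} [PseudoMetricSpace α]

theorem TotallyBounded.exists_subseq_cauchySeq {s : Set α} (hs : TotallyBounded s) {u : ℕ → α}
    (hu : ∀ n, u n ∈ s) : ∃ φ : ℕ → ℕ, StrictMono φ ∧ CauchySeq (u ∘ φ) := by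
  let ι : α → UniformSpace.Completion α := (↑)
  have hK : IsCompact (_root_.closure (ι '' s)) :=
    (totallyBounded_closure.2 (hs.image (UniformSpace.Completion.uniformContinuous_coe α))
      ).isCompact_of_isClosed isClosed_closure
  obtain ⟨_, -, φ, hφ, hlim⟩ := hK.isSeqCompact fun n ↦ subset_closure (mem_image_of_mem ι (hu n))
  refine ⟨φ, hφ, ?_⟩
  have := (UniformSpace.Completion.isUniformInducing_coe α).cauchy_map_iff
    (F := map (u ∘ φ) atTop)
  rw [map_map] at this
  exact this.1 hlim.cauchySeq

theorem cauchySeq_of_totallyBounded_range {v : ℕ → α} (hv : TotallyBounded (range v))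
    (h : ∀ k₁ k₂ : ℕ → ℕ, Tendsto k₁ atTop atTop → Tendsto k₂ atTop atTop →
      CauchySeq (v ∘ k₁) → CauchySeq (v ∘ k₂) →
      Tendsto (fun n ↦ dist (v (k₁ n)) (v (k₂ n))) atTop (𝓝 0)) :
    CauchySeq v := by
  by_contra hv'
  obtain ⟨ε, hε, hsep⟩ : ∃ ε > 0, ∀ N, ∃ m ≥ N, ∃ n ≥ N, ε ≤ dist (v m) (v n) := by
    simpa [Metric.cauchySeq_iff] using hv'
  choose m hm n hn hmn using hsep
  obtain ⟨φ₁, hφ₁, hc₁⟩ := hv.exists_subseq_cauchySeq (u := v ∘ m) fun _ ↦ mem_range_self _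
  obtain ⟨φ₂, hφ₂, hc₂⟩ := hv.exists_subseq_cauchySeq (u := v ∘ n ∘ φ₁) fun _ ↦ mem_range_self _
  have hφ : Tendsto (φ₁ ∘ φ₂) atTop atTop := (hφ₁.comp hφ₂).tendsto_atTop
  have hdist := h (m ∘ φ₁ ∘ φ₂) (n ∘ φ₁ ∘ φ₂) ((tendsto_atTop_mono hm tendsto_id).comp hφ)
    ((tendsto_atTop_mono hn tendsto_id).comp hφ) (hc₁.comp_tendsto hφ₂.tendsto_atTop) hc₂
  obtain ⟨i, hi⟩ := (hdist.eventually (gt_mem_nhds hε)).exists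
  exact (hmn _).not_gt hi

theorem CauchySeq.tendsto_dist_comp {u : ℕ → α} (hu : CauchySeq u) {k₁ k₂ : ℕ → ℕ}
    (hk₁ : Tendsto k₁ atTop atTop) (hk₂ : Tendsto k₂ atTop atTop) :
    Tendsto (fun n ↦ dist (u (k₁ n)) (u (k₂ n))) atTop (𝓝 0) :=
  (cauchySeq_iff_tendsto_dist_atTop_0.1 hu).comp
    (prod_atTop_atTop_eq (α := ℕ) (β := ℕ) ▸ hk₁.prodMk hk₂)

end PseudoMetric

section CauchyContOn

variable {X : Type u} {Y : Type v} [MetricSpace X] [MetricSpace Y] {f : X → Y}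

theorem tbRegular_of_cauchySeq_comp (hf : ∀ u : ℕ → X, CauchySeq u → CauchySeq (f ∘ u)) :
    TBRegular f := by
  intro A hA
  refine totallyBounded_of_forall_exists_subseq_cauchySeq fun w hw ↦ ?_
  choose x hxA hfx using hw
  obtain ⟨φ, hφ, hx⟩ := hA.exists_subseq_cauchySeq hxA
  refine ⟨φ, hφ, ?_⟩
  rw [show w = f ∘ x from funext fun n ↦ (hfx n).symm]
  exact hf _ hx

theorem cauchyContOn_singleton (f : X → Y) (x : X) : CauchyContOn f {x} := fun v hv _ ↦ by
  rw [show f ∘ v = fun _ ↦ f x from funext fun n ↦ congrArg f (hv n)]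
  exact cauchySeq_const _

theorem CauchyContOn.mono {A B : Set X} (hB : CauchyContOn f B) (hAB : A ⊆ B) :
    CauchyContOn f A := fun v hv ↦ hB v fun n ↦ hAB (hv n)

theorem CauchyContOn.tendsto_dist_apply {S : Set X} (hf : CauchyContOn f S) {a b : ℕ → X}
    (ha : ∀ n, a n ∈ S) (hb : ∀ n, b n ∈ S) (hac : CauchySeq a)
    (hab : Tendsto (fun n ↦ dist (a n) (b n)) atTop (𝓝 0)) :
    Tendsto (fun n ↦ dist (f (a n)) (f (b n))) atTop (𝓝 0) := by
  have hfc := hf _ (interleave_mem ha hb) (hac.interleave hab)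
  rw [comp_interleave] at hfc
  rw [Metric.tendsto_atTop]
  intro ε hε
  obtain ⟨N, hN⟩ := Metric.cauchySeq_iff.1 hfc ε hε
  refine ⟨N, fun n hn ↦ ?_⟩
  simpa using hN (2 * n) (by omega) (2 * n + 1) (by omega)

theorem CauchySeq.eventually_eq_of_not_tendsto_atTop {a : ℕ → X} (ha : CauchySeq a)
    (hlim : ∀ m, ¬Tendsto a atTop (𝓝 (a m))) {k : ℕ → ℕ} (hk : ¬Tendsto k atTop atTop)
    (hak : CauchySeq (a ∘ k)) : ∃ m, ∀ᶠ n in atTop, a (k n) = a m := by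
  obtain ⟨N, hN⟩ : ∃ N, ∃ᶠ n in atTop, k n < N := by
    simpa [tendsto_atTop_atTop, frequently_atTop] using hk
  obtain ⟨_, ⟨m, -, rfl⟩, hm⟩ := ((finite_Iio N).image a).isCompact.isSeqCompact
    |>.exists_tendsto_of_frequently_mem (hN.mono fun n hn ↦ mem_image_of_mem a hn) hak
  have hclus : ¬MapClusterPt (a m) atTop a := fun h ↦ hlim m (le_nhds_of_cauchy_adhp ha h)
  obtain ⟨U, hU, haU⟩ : ∃ U ∈ 𝓝 (a m), ∀ᶠ n in atTop, a n ∉ U := by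
    simpa [mapClusterPt_iff_frequently] using hclus
  obtain ⟨N', hN'⟩ := eventually_atTop.1 haU
  refine ⟨m, hm.eventually_eq_of_eventually_mem_finite ((finite_Iio N').image a) ?_⟩
  filter_upwards [hm hU] with n hn
  exact ⟨k n, lt_of_not_ge fun h ↦ hN' _ h hn, rfl⟩

theorem cauchyContOn_range {a : ℕ → X} (ha : CauchySeq a) (hfa : CauchySeq (f ∘ a))
    (hlim : ∀ m, ¬Tendsto a atTop (𝓝 (a m))) : CauchyContOn f (range a) := by
  intro v hv hvc
  choose k hk using hv
  obtain rfl : a ∘ k = v := funext hk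
  by_cases hk' : Tendsto k atTop atTop
  · exact hfa.comp_tendsto hk'
  · obtain ⟨m, hm⟩ := ha.eventually_eq_of_not_tendsto_atTop hlim hk' hvc
    refine (tendsto_const_nhds (x := f (a m))).congr' ?_ |>.cauchySeq
    filter_upwards [hm] with n hn
    simp [hn]

theorem tendsto_comp_of_cauchySeq_comp
    (hU : ∀ A B : Set X, A.Nonempty → B.Nonempty → CauchyContOn f A → CauchyContOn f B →
      CauchyContOn f (A ∪ B))
    {a : ℕ → X} {p : X} (ha : Tendsto a atTop (𝓝 p)) (hfa : CauchySeq (f ∘ a)) :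
    Tendsto (f ∘ a) atTop (𝓝 (f p)) := by
  by_cases hp : ∃ᶠ n in atTop, a n = p
  · obtain ⟨ψ, hψ, hψp⟩ := extraction_of_frequently_atTop hp
    refine tendsto_nhds_of_cauchySeq_of_subseq hfa hψ.tendsto_atTop ?_
    simp [Function.comp_def, hψp]
  obtain ⟨J, hJ⟩ := eventually_atTop.1 (not_frequently.1 hp)
  set a' : ℕ → X := fun n ↦ a (n + J)
  have ha' : Tendsto a' atTop (𝓝 p) := (tendsto_add_atTop_iff_nat J).2 ha
  have hS : CauchyContOn f (range a' ∪ {p}) :=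
    hU _ _ (range_nonempty a') (singleton_nonempty p)
      (cauchyContOn_range ha'.cauchySeq ((cauchySeq_shift J).2 hfa)
        fun m hm ↦ hJ (m + J) (by omega) (tendsto_nhds_unique hm ha'))
      (cauchyContOn_singleton f p)
  have := hS.tendsto_dist_apply (b := fun _ ↦ p) (fun n ↦ .inl (mem_range_self n))
    (fun _ ↦ .inr rfl) ha'.cauchySeq (tendsto_iff_dist_tendsto_zero.1 ha')
  exact (tendsto_add_atTop_iff_nat J).1 (tendsto_iff_dist_tendsto_zero.2 this)

theorem cauchySeq_comp_of_tbRegular (hf : TBRegular f)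
    (hU : ∀ A B : Set X, A.Nonempty → B.Nonempty → CauchyContOn f A → CauchyContOn f B →
      CauchyContOn f (A ∪ B))
    {u : ℕ → X} (hu : CauchySeq u) : CauchySeq (f ∘ u) := by
  refine cauchySeq_of_totallyBounded_range (range_comp f u ▸ hf _ hu.totallyBounded_range)
    fun k₁ k₂ hk₁ hk₂ hfa hfb ↦ ?_
  by_cases hconv : ∃ p, Tendsto u atTop (𝓝 p)
  · obtain ⟨p, hp⟩ := hconv
    simpa using (tendsto_comp_of_cauchySeq_comp hU (hp.comp hk₁) hfa).dist
      (tendsto_comp_of_cauchySeq_comp hU (hp.comp hk₂) hfb)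
  have hK : ∀ k, Tendsto k atTop atTop → CauchySeq (f ∘ u ∘ k) →
      CauchyContOn f (range (u ∘ k)) := fun k hk hfk ↦
    cauchyContOn_range (hu.comp_tendsto hk) hfk
      fun m hm ↦ hconv ⟨_, tendsto_nhds_of_cauchySeq_of_subseq hu hk hm⟩
  exact (hU _ _ (range_nonempty _) (range_nonempty _) (hK k₁ hk₁ hfa) (hK k₂ hk₂ hfb))
    |>.tendsto_dist_apply (fun n ↦ .inl (mem_range_self n)) (fun n ↦ .inr (mem_range_self n))
      (hu.comp_tendsto hk₁) (hu.tendsto_dist_comp hk₁ hk₂)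

end CauchyContOn

theorem cauchyCont_iff_tbRegular_and_bornology {X : Type u} {Y : Type v}
    [MetricSpace X] [MetricSpace Y] (f : X → Y) :
    List.TFAE
      [∀ u : ℕ → X, CauchySeq u → CauchySeq (f ∘ u),
       TBRegular f ∧ ∀ A B : Set X, CauchyContOn f A → CauchyContOn f B →
         CauchyContOn f (A ∪ B),
       TBRegular f ∧ IsBornologyFam {B : Set X | B.Nonempty ∧ CauchyContOn f B}] := by
  tfae_have 1 → 2 := fun hf ↦
    ⟨tbRegular_of_cauchySeq_comp hf, fun _ _ _ _ v _ hv ↦ hf v hv⟩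
  tfae_have 2 → 3 := by
    rintro ⟨hf, hU⟩
    refine ⟨hf, fun x ↦ ⟨{x}, ⟨singleton_nonempty x, cauchyContOn_singleton f x⟩, rfl⟩, ?_, ?_⟩
    · rintro A B ⟨-, hB⟩ hAB hA
      exact ⟨hA, hB.mono hAB⟩
    · rintro A B ⟨hA, hA'⟩ ⟨-, hB'⟩
      exact ⟨hA.mono subset_union_left, hU A B hA' hB'⟩
  tfae_have 3 → 1 := fun ⟨hf, _, _, hU⟩ _ ↦
    cauchySeq_comp_of_tbRegular hf fun A B hA hB hA' hB' ↦ (hU A B ⟨hA, hA'⟩ ⟨hB, hB'⟩).2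
  tfae_finish
end

section
/- Let f : (X,d) → (Y,ρ) be a function between metric spaces. The following are equivalent: (a) f is uniformly continuous; (b) f is TB-regular and the family of subsets of X on which f is uniformly continuous is closed under finite unions; (c) f is TB-regular and the family of subsets of X on which f is uniformly continuous forms a bornology (covers X, is hereditary under inclusion of subsets, and is closed under finite unions). -/
universe u v

open Filter Metric Set

section Aux

variable {X : Type u} {Y : Type v} [MetricSpace X] [MetricSpace Y] {f : X → Y}

/-- Any function is uniformly continuous on a uniformly separated set. -/
lemma TFAEAux.ucOn_of_separated {δ : ℝ} (hδ : 0 < δ) {S : Set X}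
    (h : ∀ u ∈ S, ∀ v ∈ S, u ≠ v → δ ≤ dist u v) : UniformContinuousOn f S := by
  rw [Metric.uniformContinuousOn_iff]
  intro ε hε
  refine ⟨δ, hδ, fun x hx y hy hxy => ?_⟩
  by_cases hxy' : x = y
  · simp [hxy', hε]
  · exact absurd hxy (not_lt.2 (h x hx y hy hxy'))

lemma TFAEAux.ucOn_singleton (c : X) : UniformContinuousOn (f := f) {c} :=
  TFAEAux.ucOn_of_separated one_pos (by rintro u rfl v rfl h; exact absurd rfl h)

lemma TFAEAux.ucOn_mono {S T : Set X} (h : UniformContinuousOn f S) (hTS : T ⊆ S) :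
    UniformContinuousOn f T := by
  rw [Metric.uniformContinuousOn_iff] at h ⊢
  intro ε hε
  obtain ⟨δ, hδ, h⟩ := h ε hε
  exact ⟨δ, hδ, fun x hx y hy => h x (hTS hx) y (hTS hy)⟩

/-- Key lemma: if `f ∘ z` is a Cauchy sequence and each term of `z` is uniformly separated
from the later distinct terms, then `f` is uniformly continuous on the range of `z`. -/
lemma TFAEAux.ucOn_range_of_cauchy {z : ℕ → X} (hfz : CauchySeq (fun n => f (z n)))
    (hsep : ∀ i, ∃ δ > 0, ∀ j, i < j → z j ≠ z i → δ ≤ dist (z i) (z j)) :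
    UniformContinuousOn f (Set.range z) := by
  rw [Metric.uniformContinuousOn_iff]
  intro ε hε
  obtain ⟨N, hN⟩ := Metric.cauchySeq_iff.1 hfz ε hε
  have key : ∀ M, ∃ δ > 0, ∀ i < M, ∀ j, i < j → z j ≠ z i → δ ≤ dist (z i) (z j) := by
    intro M
    induction M with
    | zero => exact ⟨1, one_pos, fun i hi => absurd hi (Nat.not_lt_zero i)⟩
    | succ M ih =>
      obtain ⟨δ, hδ, h⟩ := ih
      obtain ⟨δ', hδ', h'⟩ := hsep M
      refine ⟨min δ δ', lt_min hδ hδ', fun i hi j hij hne => ?_⟩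
      rcases Nat.lt_succ_iff_lt_or_eq.1 hi with h1 | rfl
      · exact le_trans (min_le_left _ _) (h i h1 j hij hne)
      · exact le_trans (min_le_right _ _) (h' j hij hne)
  obtain ⟨δ, hδ, h⟩ := key N
  refine ⟨δ, hδ, ?_⟩
  rintro x ⟨i, rfl⟩ y ⟨j, rfl⟩ hd
  by_cases heq : z i = z j
  · simp [heq, hε]
  have claim : ∀ k l : ℕ, k < l → z k ≠ z l → dist (z k) (z l) < δ → N ≤ k := by
    intro k l hkl hne hdd
    by_contra hk
    exact absurd hdd (not_lt.2 (h k (not_le.1 hk) l hkl (Ne.symm hne)))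
  rcases lt_trichotomy i j with hij | rfl | hij
  · have hi : N ≤ i := claim i j hij heq hd
    exact hN i hi j (le_of_lt (lt_of_le_of_lt hi hij))
  · exact absurd rfl heq
  · have hj : N ≤ j := claim j i hij (Ne.symm heq) (dist_comm (z i) (z j) ▸ hd)
    exact hN i (le_of_lt (lt_of_le_of_lt hj hij))  j hj

/-- A Cauchy sequence that does not converge to any of its own terms satisfies the
separation condition. -/
lemma TFAEAux.hsep_of_not_tendsto {z : ℕ → X} (hz : CauchySeq z)
    (h : ∀ i, ¬ Tendsto z atTop (nhds (z i))) :
    ∀ i, ∃ δ > 0, ∀ j, i < j → z j ≠ z i → δ ≤ dist (z i) (z j) := by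
  intro i
  have hg : CauchySeq (fun j => dist (z j) (z i)) := by
    rw [Metric.cauchySeq_iff] at hz ⊢
    intro ε hε
    obtain ⟨N, hN⟩ := hz ε hε
    refine ⟨N, fun m hm n hn => ?_⟩
    calc dist (dist (z m) (z i)) (dist (z n) (z i)) = |dist (z m) (z i) - dist (z n) (z i)| := rfl
      _ ≤ dist (z m) (z n) := abs_dist_sub_le _ _ _
      _ < ε := hN m hm n hn
  obtain ⟨L, hL⟩ := cauchySeq_tendsto_of_complete hg
  have hL0 : 0 < L := by
    rcases lt_or_eq_of_le (le_of_tendsto_of_tendsto' tendsto_const_nhds hL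
      (fun j => dist_nonneg)) with h1 | h1
    · exact h1
    · exact absurd (tendsto_iff_dist_tendsto_zero.2 (h1 ▸ hL)) (h i)
  have hev : ∀ᶠ j in atTop, L / 2 < dist (z j) (z i) :=
    hL.eventually (eventually_gt_nhds (by linarith))
  obtain ⟨M, hM⟩ := eventually_atTop.1 hev
  have key : ∀ M', ∃ δ > 0, ∀ j < M', z j ≠ z i → δ ≤ dist (z i) (z j) := by
    intro M'
    induction M' with
    | zero => exact ⟨1, one_pos, fun j hj => absurd hj (Nat.not_lt_zero j)⟩
    | succ M' ih =>
      obtain ⟨δ, hδ, hh⟩ := ih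
      by_cases hne : z M' = z i
      · exact ⟨δ, hδ, fun j hj hne' => by
          rcases Nat.lt_succ_iff_lt_or_eq.1 hj with h1 | rfl
          · exact hh j h1 hne'
          · exact absurd hne hne'⟩
      · refine ⟨min δ (dist (z i) (z M')), lt_min hδ (dist_pos.2 (fun hc => hne hc.symm)),
          fun j hj hne' => ?_⟩
        rcases Nat.lt_succ_iff_lt_or_eq.1 hj with h1 | rfl
        · exact le_trans (min_le_left _ _) (hh j h1 hne')
        · exact min_le_right _ _
  obtain ⟨δ, hδ, hh⟩ := key M
  refine ⟨min δ (L / 2), lt_min hδ (by linarith), fun j hij hne => ?_⟩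
  by_cases hjM : j < M
  · exact le_trans (min_le_left _ _) (hh j hjM hne)
  · exact le_trans (min_le_right _ _)
      (le_of_lt ((dist_comm (z i) (z j)) ▸ hM j (not_lt.1 hjM)))

/-- Every sequence in a totally bounded set has a Cauchy subsequence. -/
lemma TFAEAux.exists_cauchy_subseq {s : Set X} (hs : TotallyBounded s) (u : ℕ → X)
    (hu : ∀ n, u n ∈ s) : ∃ φ : ℕ → ℕ, StrictMono φ ∧ CauchySeq (u ∘ φ) := by
  set v : ℕ → UniformSpace.Completion X := fun n => (u n : UniformSpace.Completion X) with hv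
  have hK : IsCompact (closure ((↑) '' s : Set (UniformSpace.Completion X))) :=
    TotallyBounded.isCompact_of_isClosed
      ((hs.image (UniformSpace.Completion.uniformContinuous_coe X)).closure) isClosed_closure
  have hvK : ∀ n, v n ∈ closure ((↑) '' s : Set (UniformSpace.Completion X)) :=
    fun n => subset_closure ⟨u n, hu n, rfl⟩
  obtain ⟨a, -, φ, hφ, ha⟩ := hK.tendsto_subseq hvK
  refine ⟨φ, hφ, ?_⟩
  have hvc : CauchySeq (v ∘ φ) := ha.cauchySeq
  rw [Metric.cauchySeq_iff] at hvc ⊢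
  intro ε hε
  obtain ⟨N, hN⟩ := hvc ε hε
  refine ⟨N, fun m hm n hn => ?_⟩
  have := hN m hm n hn
  rwa [Function.comp_apply, Function.comp_apply, hv,
    UniformSpace.Completion.dist_eq] at this

/-- From a sequence with non-totally-bounded range one can extract a uniformly
separated subsequence. -/
lemma TFAEAux.exists_separated_subseq {x : ℕ → X} (hx : ¬ TotallyBounded (Set.range x)) :
    ∃ δ > 0, ∃ φ : ℕ → ℕ, StrictMono φ ∧
      ∀ k l, k < l → δ ≤ dist (x (φ k)) (x (φ l)) := by
  rw [totallyBounded_iff] at hx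
  push_neg at hx
  obtain ⟨δ, hδ, hnet⟩ := hx
  have step : ∀ n : ℕ, ∃ j, n < j ∧ ∀ i ≤ n, δ ≤ dist (x i) (x j) := by
    intro n
    have hsub := hnet (x '' (Set.Iic n)) ((Set.finite_Iic n).image x)
    rw [Set.not_subset] at hsub
    obtain ⟨p, ⟨j, rfl⟩, hp⟩ := hsub
    have hmem : ∀ i ≤ n, ¬ (x j ∈ ball (x i) δ) := by
      intro i hi hball
      exact hp (Set.mem_biUnion ⟨i, hi, rfl⟩ hball)
    have hjn : n < j := by
      by_contra hj
      exact hmem j (not_lt.1 hj) (mem_ball_self hδ)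
    exact ⟨j, hjn, fun i hi => by
      have := hmem i hi
      rw [mem_ball, not_lt, dist_comm] at this
      exact this⟩
  choose g hg1 hg2 using step
  set φ : ℕ → ℕ := fun k => Nat.rec 0 (fun _ p => g p) k with hφdef
  have hφsucc : ∀ k, φ (k + 1) = g (φ k) := fun k => rfl
  have hmono : StrictMono φ := strictMono_nat_of_lt_succ (fun k => by
    rw [hφsucc]; exact hg1 (φ k))
  refine ⟨δ, hδ, φ, hmono, fun k l hkl => ?_⟩
  obtain ⟨m, rfl⟩ : ∃ m, l = m + 1 := ⟨l - 1, by omega⟩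
  rw [hφsucc]
  exact hg2 (φ m) (φ k) (hmono.le_iff_le.2 (by omega))

/-- Witness of failure of uniform continuity on a set. -/
lemma TFAEAux.not_ucOn_pair {S : Set X} {ε : ℝ} (hε : 0 < ε) {x y : ℕ → X}
    (hx : ∀ n, x n ∈ S) (hy : ∀ n, y n ∈ S)
    (hd : ∀ δ > (0:ℝ), ∃ n, dist (x n) (y n) < δ)
    (hf : ∀ n, ε ≤ dist (f (x n)) (f (y n))) : ¬ UniformContinuousOn f S := by
  intro h
  rw [Metric.uniformContinuousOn_iff] at h
  obtain ⟨δ, hδ, h⟩ := h ε hε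
  obtain ⟨n, hn⟩ := hd δ hδ
  exact absurd (h (x n) (hx n) (y n) (hy n) hn) (not_lt.2 (hf n))

/-- A sequence asymptotic to a Cauchy sequence is Cauchy. -/
lemma TFAEAux.cauchy_of_close {x y : ℕ → X} (hx : CauchySeq x)
    (hd : ∀ n, dist (x n) (y n) < 1 / (n + 1)) : CauchySeq y := by
  rw [Metric.cauchySeq_iff] at hx ⊢
  intro ε hε
  obtain ⟨N1, hN1⟩ := hx (ε / 3) (by linarith)
  obtain ⟨N2, hN2⟩ := exists_nat_one_div_lt (show (0:ℝ) < ε / 3 by linarith)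
  refine ⟨max N1 N2, fun m hm n hn => ?_⟩
  have h1 : dist (x m) (y m) < ε / 3 := lt_of_lt_of_le (lt_of_lt_of_le (hd m)
    (by
      apply one_div_le_one_div_of_le (by positivity)
      have : N2 ≤ m := le_trans (le_max_right _ _) hm
      exact_mod_cast Nat.succ_le_succ this)) (le_of_lt hN2)
  have h2 : dist (x n) (y n) < ε / 3 := lt_of_lt_of_le (lt_of_lt_of_le (hd n)
    (by
      apply one_div_le_one_div_of_le (by positivity)
      have : N2 ≤ n := le_trans (le_max_right _ _) hn
      exact_mod_cast Nat.succ_le_succ this)) (le_of_lt hN2)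
  have h3 : dist (x m) (x n) < ε / 3 :=
    hN1 m (le_trans (le_max_left _ _) hm) n (le_trans (le_max_left _ _) hn)
  calc dist (y m) (y n) ≤ dist (y m) (x m) + dist (x m) (x n) + dist (x n) (y n) :=
        dist_triangle4 _ _ _ _
    _ < ε / 3 + ε / 3 + ε / 3 := by rw [dist_comm (y m) (x m)]; linarith
    _ = ε := by ring

/-- The convergent case of the main argument. -/
lemma TFAEAux.false_of_tendsto
    (hU : ∀ A B : Set X, UniformContinuousOn f A → UniformContinuousOn f B →
      UniformContinuousOn f (A ∪ B))
    {w : ℕ → X} {c : X} {ε : ℝ} (hε : 0 < ε)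
    (hw : Tendsto w atTop (nhds c)) (hfw : CauchySeq (fun n => f (w n)))
    (hb : ∀ n, ε ≤ dist (f (w n)) (f c)) : False := by
  have hneq : ∀ i, w i ≠ c := by
    intro i hc
    have := hb i
    rw [hc, dist_self] at this
    linarith
  have hsep := TFAEAux.hsep_of_not_tendsto hw.cauchySeq
    (fun i ht => hneq i (tendsto_nhds_unique ht hw))
  have hUC : UniformContinuousOn f (Set.range w ∪ {c}) :=
    hU _ _ (TFAEAux.ucOn_range_of_cauchy hfw hsep) (TFAEAux.ucOn_singleton c)
  refine TFAEAux.not_ucOn_pair hε (x := w) (y := fun _ => c)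
    (fun n => Or.inl (mem_range_self n)) (fun n => Or.inr rfl) ?_ hb hUC
  intro δ hδ
  obtain ⟨N, hN⟩ := (Metric.tendsto_atTop.1 hw) δ hδ
  exact ⟨N, hN N le_rfl⟩

end Aux

theorem uniformContinuous_iff_tbRegular_and_bornology {X : Type u} {Y : Type v}
    [MetricSpace X] [MetricSpace Y] (f : X → Y) :
    List.TFAE
      [UniformContinuous f,
       TBRegular f ∧ ∀ A B : Set X, UniformContinuousOn f A → UniformContinuousOn f B →
         UniformContinuousOn f (A ∪ B),
       TBRegular f ∧ IsBornologyFam {B : Set X | B.Nonempty ∧ UniformContinuousOn f B}] := by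
  tfae_have 1 → 2 := by
    intro h
    refine ⟨fun A hA => hA.image h, fun A B _ _ => ?_⟩
    rw [Metric.uniformContinuousOn_iff]
    intro ε hε
    obtain ⟨δ, hδ, h'⟩ := Metric.uniformContinuous_iff.1 h ε hε
    exact ⟨δ, hδ, fun x _ y _ hxy => h' hxy⟩
  tfae_have 2 → 3 := by
    rintro ⟨hTB, hU⟩
    refine ⟨hTB, fun x => ⟨{x}, ⟨Set.singleton_nonempty x, TFAEAux.ucOn_singleton x⟩, rfl⟩,
      fun A B hB hAB hA => ⟨hA, TFAEAux.ucOn_mono hB.2 hAB⟩,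
      fun A B hA hB => ⟨⟨hA.1.choose, Or.inl hA.1.choose_spec⟩, hU A B hA.2 hB.2⟩⟩
  tfae_have 3 → 2 := by
    rintro ⟨hTB, hcov, hher, huni⟩
    refine ⟨hTB, fun A B hA hB => ?_⟩
    rcases A.eq_empty_or_nonempty with rfl | hA'
    · rwa [Set.empty_union]
    rcases B.eq_empty_or_nonempty with rfl | hB'
    · rwa [Set.union_empty]
    exact (huni A B ⟨hA', hA⟩ ⟨hB', hB⟩).2
  tfae_have 2 → 1 := by
    rintro ⟨hTB, hU⟩
    by_contra h1
    rw [Metric.uniformContinuous_iff] at h1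
    push_neg at h1
    obtain ⟨ε, hε, hcounter⟩ := h1
    choose xs ys hdist hfd using fun n : ℕ =>
      hcounter (1 / (n + 1)) (by positivity)
    have hds : ∀ φ : ℕ → ℕ, StrictMono φ → ∀ n, dist (xs (φ n)) (ys (φ n)) < 1 / (n + 1) := by
      intro φ hφ n
      refine lt_of_lt_of_le (hdist (φ n)) ?_
      apply one_div_le_one_div_of_le (by positivity)
      have := hφ.le_apply (x := n)
      exact_mod_cast Nat.succ_le_succ this
    by_cases htb : TotallyBounded (Set.range xs)
    · -- totally bounded case
      obtain ⟨φ₁, hφ₁, hc1⟩ := TFAEAux.exists_cauchy_subseq htb xs (fun n => mem_range_self n)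
      set x1 : ℕ → X := xs ∘ φ₁ with hx1
      set y1 : ℕ → X := ys ∘ φ₁ with hy1
      have hd1 : ∀ n, dist (x1 n) (y1 n) < 1 / (n + 1) := hds φ₁ hφ₁
      have hy1c : CauchySeq y1 := TFAEAux.cauchy_of_close hc1 hd1
      have hT : TotallyBounded (Set.range x1 ∪ Set.range y1) :=
        hc1.totallyBounded_range.union hy1c.totallyBounded_range
      have hfT : TotallyBounded (f '' (Set.range x1 ∪ Set.range y1)) := hTB _ hT
      obtain ⟨φ₂, hφ₂, hc2⟩ := TFAEAux.exists_cauchy_subseq hfT (fun n => f (x1 n))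
        (fun n => ⟨x1 n, Or.inl (mem_range_self n), rfl⟩)
      obtain ⟨φ₃, hφ₃, hc3⟩ := TFAEAux.exists_cauchy_subseq hfT (fun n => f (y1 (φ₂ n)))
        (fun n => ⟨y1 (φ₂ n), Or.inr (mem_range_self _), rfl⟩)
      set ψ : ℕ → ℕ := φ₂ ∘ φ₃ with hψ
      have hψm : StrictMono ψ := hφ₂.comp hφ₃
      set a : ℕ → X := fun n => x1 (ψ n) with hadef
      set b : ℕ → X := fun n => y1 (ψ n) with hbdef
      have ha : CauchySeq a := hc1.comp_tendsto hψm.tendsto_atTop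
      have hfa : CauchySeq (fun n => f (a n)) := hc2.comp_tendsto hφ₃.tendsto_atTop
      have hfb : CauchySeq (fun n => f (b n)) := hc3
      have hdab : ∀ n, dist (a n) (b n) < 1 / (n + 1) := hds (φ₁ ∘ ψ) (hφ₁.comp hψm)
      have hb : CauchySeq b := TFAEAux.cauchy_of_close ha hdab
      have hfab : ∀ n, ε ≤ dist (f (a n)) (f (b n)) := fun n => hfd _
      have hdsmall : ∀ δ > (0:ℝ), ∃ n, dist (a n) (b n) < δ := by
        intro δ hδ
        obtain ⟨n, hn⟩ := exists_nat_one_div_lt hδ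
        exact ⟨n, lt_trans (hdab n) hn⟩
      by_cases hcv : ∃ c, Tendsto a atTop (nhds c)
      · obtain ⟨c, hac⟩ := hcv
        have hd0 : Tendsto (fun n => dist (a n) (b n)) atTop (nhds 0) := by
          apply squeeze_zero (fun n => dist_nonneg) (fun n => le_of_lt (hdab n))
          exact tendsto_one_div_add_atTop_nhds_zero_nat
        have hbc : Tendsto b atTop (nhds c) := by
          rw [tendsto_iff_dist_tendsto_zero]
          have hbnd : ∀ n, dist (b n) c ≤ dist (a n) (b n) + dist (a n) c := by
            intro n
            calc dist (b n) c ≤ dist (b n) (a n) + dist (a n) c := dist_triangle _ _ _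
              _ = dist (a n) (b n) + dist (a n) c := by rw [dist_comm (b n) (a n)]
          apply squeeze_zero (fun n => dist_nonneg) hbnd
          have := hd0.add (tendsto_iff_dist_tendsto_zero.1 hac)
          simpa using this
        have halt : ∀ n, ε / 2 ≤ dist (f (a n)) (f c) ∨ ε / 2 ≤ dist (f (b n)) (f c) := by
          intro n
          by_contra hcon
          push_neg at hcon
          have h1 := hfab n
          have h2 : dist (f (a n)) (f (b n)) ≤ dist (f (a n)) (f c) + dist (f (b n)) (f c) :=
            dist_triangle_right _ _ _
          linarith [hcon.1, hcon.2]
        have hor : (∃ᶠ n in atTop, ε / 2 ≤ dist (f (a n)) (f c)) ∨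
            (∃ᶠ n in atTop, ε / 2 ≤ dist (f (b n)) (f c)) := by
          rw [← frequently_or_distrib]
          exact Frequently.of_forall halt
        rcases hor with hfreq | hfreq
        · obtain ⟨ρ, hρ, hρs⟩ := extraction_of_frequently_atTop hfreq
          exact TFAEAux.false_of_tendsto hU (by linarith)
            (hac.comp hρ.tendsto_atTop) (hfa.comp_tendsto hρ.tendsto_atTop) hρs
        · obtain ⟨ρ, hρ, hρs⟩ := extraction_of_frequently_atTop hfreq
          exact TFAEAux.false_of_tendsto hU (by linarith)
            (hbc.comp hρ.tendsto_atTop) (hfb.comp_tendsto hρ.tendsto_atTop) hρs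
      · have hbv : ¬ ∃ c, Tendsto b atTop (nhds c) := by
          rintro ⟨c, hbc⟩
          refine hcv ⟨c, ?_⟩
          rw [tendsto_iff_dist_tendsto_zero]
          apply squeeze_zero (fun n => dist_nonneg)
            (fun n => dist_triangle (a n) (b n) c) ?_
          have hd0 : Tendsto (fun n => dist (a n) (b n)) atTop (nhds 0) := by
            apply squeeze_zero (fun n => dist_nonneg) (fun n => le_of_lt (hdab n))
            exact tendsto_one_div_add_atTop_nhds_zero_nat
          have := hd0.add (tendsto_iff_dist_tendsto_zero.1 hbc)
          simpa using this
        have hUCa := TFAEAux.ucOn_range_of_cauchy hfa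
          (TFAEAux.hsep_of_not_tendsto ha (fun i ht => hcv ⟨a i, ht⟩))
        have hUCb := TFAEAux.ucOn_range_of_cauchy hfb
          (TFAEAux.hsep_of_not_tendsto hb (fun i ht => hbv ⟨b i, ht⟩))
        exact TFAEAux.not_ucOn_pair hε (x := a) (y := b)
          (fun n => Or.inl (mem_range_self n)) (fun n => Or.inr (mem_range_self n))
          hdsmall hfab (hU _ _ hUCa hUCb)
    · -- not totally bounded case
      obtain ⟨δ, hδ, φ, hφ, hsepx⟩ := TFAEAux.exists_separated_subseq htb
      obtain ⟨K, hK⟩ := exists_nat_one_div_lt (show (0:ℝ) < δ / 4 by linarith)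
      set ψ : ℕ → ℕ := fun k => φ (K + k) with hψdef
      have hψm : StrictMono ψ := hφ.comp (fun m n h => by omega)
      set a : ℕ → X := fun k => xs (ψ k) with hadef
      set b : ℕ → X := fun k => ys (ψ k) with hbdef
      have hsmall : ∀ k, dist (a k) (b k) < δ / 4 := by
        intro k
        refine lt_of_lt_of_le (hdist (ψ k)) (le_trans ?_ (le_of_lt hK))
        apply one_div_le_one_div_of_le (by positivity)
        have h1 : K ≤ ψ k := le_trans (Nat.le_add_right K k) hφ.le_apply
        exact_mod_cast Nat.succ_le_succ h1
      have hsepa : ∀ k l, k ≠ l → δ ≤ dist (a k) (a l) := by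
        intro k l hkl
        rcases lt_or_gt_of_ne hkl with h | h
        · exact hsepx (K + k) (K + l) (by omega)
        · rw [dist_comm]; exact hsepx (K + l) (K + k) (by omega)
      have hUCa : UniformContinuousOn f (Set.range a) := by
        refine TFAEAux.ucOn_of_separated hδ ?_
        rintro u ⟨k, rfl⟩ v ⟨l, rfl⟩ hne
        exact hsepa k l (fun h => hne (by rw [h]))
      have hUCb : UniformContinuousOn f (Set.range b) := by
        refine TFAEAux.ucOn_of_separated (show (0:ℝ) < δ / 2 by linarith) ?_
        rintro u ⟨k, rfl⟩ v ⟨l, rfl⟩ hne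
        have hkl : k ≠ l := fun h => hne (by rw [h])
        have h1 := hsepa k l hkl
        have h2 := hsmall k
        have h3 := hsmall l
        have h4 : dist (a k) (a l) ≤ dist (a k) (b k) + dist (b k) (b l) + dist (b l) (a l) :=
          dist_triangle4 _ _ _ _
        rw [dist_comm (b l) (a l)] at h4
        linarith
      have hdsmall : ∀ δ' > (0:ℝ), ∃ n, dist (a n) (b n) < δ' := by
        intro δ' hδ'
        obtain ⟨n, hn⟩ := exists_nat_one_div_lt hδ'
        refine ⟨n, lt_trans (lt_of_lt_of_le (hdist (ψ n)) ?_) hn⟩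
        apply one_div_le_one_div_of_le (by positivity)
        have h1 : n ≤ ψ n := hψm.le_apply
        exact_mod_cast Nat.succ_le_succ h1
      exact TFAEAux.not_ucOn_pair hε (x := a) (y := b)
        (fun n => Or.inl (mem_range_self n)) (fun n => Or.inr (mem_range_self n))
        hdsmall (fun n => hfd _) (hU _ _ hUCa hUCb)
  tfae_finish
end

section
/- Let (X,d) be a metric space, and define the local compactness functional ν : X → [0,∞) by ν(x) = sup{ε > 0 : the closure of B(x,ε) is compact} if x has a compact neighborhood, and ν(x) = 0 otherwise; call a nonempty closed subset A of X almost nowhere locally compact if for every ε > 0 the set {a ∈ A : ν(a) ≥ ε} is compact, and call (X,d) cofinally complete if every cofinally Cauchy sequence in X has a cluster point. Then the following are equivalent: (a) (X,d) is cofinally complete; (b) for every metric space (Y,ρ), every continuous function f : (X,d) → (Y,ρ) is strongly uniformly continuous on each almost nowhere locally compact subset of X; (c) for every metric space (Y,ρ) and every continuous function f : (X,d) → (Y,ρ), whenever A is an almost nowhere locally compact subset of X and B is any nonempty subset of X with gap D_d(A,B) = inf{d(a,b) : a ∈ A, b ∈ B} = 0, then D_ρ(f(A), f(B)) = 0. 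-/
universe u v

open Filter

/-- The local compactness functional: `nu x` is the supremum of the radii `ε > 0` such that
the closure of the ball `B(x, ε)` is compact (and `0` if there is no such radius, i.e. if
`x` has no compact neighborhood). -/
noncomputable def nu {X : Type u} [MetricSpace X] (x : X) : ENNReal :=
  ⨆ ε ∈ {ε : ℝ | 0 < ε ∧ IsCompact (closure (Metric.ball x ε))}, ENNReal.ofReal ε

/-- A nonempty closed subset `A` is almost nowhere locally compact if for every `ε > 0`
the set `{a ∈ A | nu a ≥ ε}` is compact. -/
def ANLC {X : Type u} [MetricSpace X] (A : Set X) : Prop :=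
  A.Nonempty ∧ IsClosed A ∧
    ∀ ε : ℝ, 0 < ε → IsCompact {a ∈ A | ENNReal.ofReal ε ≤ nu a}

/-- A sequence is cofinally Cauchy if for every `ε > 0` there is an infinite set of indices
whose terms are pairwise within `ε` of each other. -/
def CofinallyCauchy {X : Type u} [MetricSpace X] (u : ℕ → X) : Prop :=
  ∀ ε : ℝ, 0 < ε → ∃ S : Set ℕ, S.Infinite ∧ ∀ m ∈ S, ∀ n ∈ S, dist (u m) (u n) < ε

/-- A metric space is cofinally complete if every cofinally Cauchy sequence clusters. -/
def CofinallyComplete (X : Type u) [MetricSpace X] : Prop :=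
  ∀ u : ℕ → X, CofinallyCauchy u → ∃ p : X, MapClusterPt p atTop u

/-- The gap between two subsets of a metric space, computed with `edist`. -/
noncomputable def setGap {X : Type u} [MetricSpace X] (A B : Set X) : ENNReal :=
  ⨅ a ∈ A, ⨅ b ∈ B, edist a b

/-- `f` is strongly uniformly continuous on `B` if for every `ε > 0` there is a `δ > 0` such
that whenever `dist x y < δ` and `{x, y} ∩ B ≠ ∅`, we have `dist (f x) (f y) < ε`. -/
def StrongUnifContOn {X : Type u} {Y : Type v} [MetricSpace X] [MetricSpace Y]
    (f : X → Y) (B : Set X) : Prop :=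
  ∀ ε > (0 : ℝ), ∃ δ > (0 : ℝ), ∀ x y : X,
    dist x y < δ → (x ∈ B ∨ y ∈ B) → dist (f x) (f y) < ε

/-!
(a) ⇒ (b): if strong uniform continuity fails on `A`, there are `aₙ ∈ A` and `bₙ` with
`d(aₙ, bₙ) → 0` but `ρ(f aₙ, f bₙ) ≥ ε`, so it suffices that every sequence in an ANLC set
clusters. If `ν(aₙ) ≥ η` frequently, those terms lie in a compact set. Otherwise, along a
subsequence `ν(aₙ) < 1/n`, so the closed `1/n`-ball about `aₙ` is not compact and carries a
sequence without cluster point. These rows shrink, so together they form a cofinally Cauchy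
sequence; its cluster point can only come from infinitely many rows, and is then a cluster point
of `(aₙ)`.

(c) ⇒ (a): given a cofinally Cauchy sequence without cluster point, every subset of its range is
closed. Pick distinct points `aₖ, bₖ` among terms that are pairwise `1/k`-close. A point of such
an infinite `1/k`-close family has `ν ≤ 1/k`, so `{aₖ}` is ANLC; its gap to `{bₖ}` is `0`, and an
Urysohn function separating the two sets contradicts (c).
-/

open Set Topology

section ClusterPoints

variable {ι X : Type*}

theorem not_mapClusterPt_cofinite_iff [TopologicalSpace X] {u : ι → X} {p : X} :
    ¬ MapClusterPt p cofinite u ↔ ∃ U ∈ 𝓝 p, {i | u i ∈ U}.Finite := by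
  simp only [mapClusterPt_iff_frequently, frequently_cofinite_iff_infinite, not_forall,
    Set.not_infinite, exists_prop]

variable [TopologicalSpace X] {u : ι → X}

theorem finite_preimage_singleton_of_not_mapClusterPt {p : X}
    (hp : ¬ MapClusterPt p cofinite u) : (u ⁻¹' {p}).Finite := by
  obtain ⟨U, hU, hfin⟩ := not_mapClusterPt_cofinite_iff.1 hp
  exact hfin.subset fun i (hi : u i = p) => show u i ∈ U from hi ▸ mem_of_mem_nhds hU

theorem Set.Infinite.image_of_forall_not_mapClusterPt (hu : ∀ p, ¬ MapClusterPt p cofinite u)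
    {S : Set ι} (hS : S.Infinite) : (u '' S).Infinite := fun hfin =>
  hS ((hfin.preimage' fun p _ => finite_preimage_singleton_of_not_mapClusterPt (hu p)).subset
    (subset_preimage_image u S))

theorem isClosed_of_subset_range_of_forall_not_mapClusterPt [T1Space X]
    (hu : ∀ p, ¬ MapClusterPt p cofinite u) {C : Set X} (hC : C ⊆ range u) : IsClosed C := by
  have hlf : LocallyFinite fun i => {u i} ∩ C := fun p => by
    obtain ⟨U, hU, hfin⟩ := not_mapClusterPt_cofinite_iff.1 (hu p)
    exact ⟨U, hU, hfin.subset fun i ⟨x, ⟨hx, _⟩, hxU⟩ => show u i ∈ U from (mem_singleton_iff.1 hx) ▸ hxU⟩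
  have hcover : ⋃ i, {u i} ∩ C = C := by
    rw [← iUnion_inter, iUnion_singleton_eq_range, inter_eq_right.2 hC]
  exact hcover ▸ hlf.isClosed_iUnion fun i => ((finite_singleton _).inter_of_left C).isClosed

theorem exists_mapClusterPt_of_infinite_of_isCompact {S : Set ι} (hS : S.Infinite) {K : Set X}
    (hK : IsCompact K) (hSK : ∀ i ∈ S, u i ∈ K) : ∃ p, MapClusterPt p cofinite u :=
  let ⟨p, _, hp⟩ := hK.exists_mapClusterPt_of_frequently
    (frequently_cofinite_iff_infinite.2 (hS.mono hSK))
  ⟨p, hp⟩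

end ClusterPoints

section Rows

variable {ι κ X : Type*} [PseudoMetricSpace X]

theorem not_mapClusterPt_uncurry_of_dist_le {x : ι → X} {r : ι → ℝ} {Y : ι → κ → X}
    (hr : Tendsto r cofinite (𝓝 0)) (hY : ∀ i k, dist (Y i k) (x i) ≤ r i)
    (hx : ∀ p, ¬ MapClusterPt p cofinite x) (hrow : ∀ i p, ¬ MapClusterPt p cofinite (Y i))
    (p : X) : ¬ MapClusterPt p cofinite (Function.uncurry Y) := by
  obtain ⟨U, hU, hUfin⟩ := not_mapClusterPt_cofinite_iff.1 (hx p)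
  obtain ⟨δ, hδ, hball⟩ := Metric.mem_nhds_iff.1 hU
  set I := {i | x i ∈ U} ∪ {i | δ / 2 ≤ r i}
  have hI : I.Finite := hUfin.union <| by
    simpa only [not_lt] using eventually_cofinite.1 (hr.eventually (gt_mem_nhds (half_pos hδ)))
  choose V hV hVfin using fun i => not_mapClusterPt_cofinite_iff.1 (hrow i p)
  refine not_mapClusterPt_cofinite_iff.2 ⟨Metric.ball p (δ / 2) ∩ ⋂ i ∈ I, V i,
    inter_mem (Metric.ball_mem_nhds p (half_pos hδ)) ((biInter_mem hI).2 fun i _ => hV i),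
    (hI.biUnion fun i _ => (finite_singleton i).prod (hVfin i)).subset ?_⟩
  rintro ⟨i, k⟩ ⟨hnear, hVik⟩
  -- Outside the finite set `I`, the whole row `Y i` stays `δ / 2` away from `p`.
  have hi : i ∈ I := by
    by_contra hi
    simp only [I, mem_union, mem_ofPred_eq, not_or, not_le] at hi
    have hfar : δ ≤ dist (x i) p := not_lt.1 fun h => hi.1 (hball h)
    have := dist_triangle_left (x i) p (Y i k)
    have hnear : dist (Y i k) p < δ / 2 := hnear
    linarith [hY i k]
  exact mem_biUnion hi ⟨rfl, mem_iInter₂.1 hVik i hi⟩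

end Rows

section LocalCompactness

variable {X : Type*} [MetricSpace X]

theorem ofReal_le_nu {x : X} {r : ℝ} (hr : 0 < r) (hK : IsCompact (closure (Metric.ball x r))) :
    ENNReal.ofReal r ≤ nu x :=
  le_iSup₂ (f := fun ε (_ : ε ∈ {ε : ℝ | 0 < ε ∧ IsCompact (closure (Metric.ball x ε))}) =>
    ENNReal.ofReal ε) r ⟨hr, hK⟩

theorem not_isCompact_closure_ball_of_nu_lt {x : X} {r : ℝ} (h : nu x < ENNReal.ofReal r) :
    ¬ IsCompact (closure (Metric.ball x r)) := fun hK =>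
  (h.trans_le (ofReal_le_nu (ENNReal.ofReal_pos.1 (bot_le.trans_lt h)) hK)).false

theorem exists_isCompact_closure_ball_of_lt_nu {x : X} {c : ENNReal} (h : c < nu x) :
    ∃ r, c < ENNReal.ofReal r ∧ IsCompact (closure (Metric.ball x r)) := by
  simp only [nu, lt_iSup_iff, mem_ofPred_eq, exists_prop] at h
  obtain ⟨r, ⟨-, hK⟩, hcr⟩ := h
  exact ⟨r, hcr, hK⟩

theorem nu_le_of_mem_image {ι : Type*} {u : ι → X} (hu : ∀ p, ¬ MapClusterPt p cofinite u)
    {S : Set ι} (hS : S.Infinite) {r : ℝ} (hSr : ∀ m ∈ S, ∀ n ∈ S, dist (u m) (u n) < r)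
    {x : X} (hx : x ∈ u '' S) : nu x ≤ ENNReal.ofReal r := by
  obtain ⟨n, hn, rfl⟩ := hx
  by_contra! hlt
  obtain ⟨r', hrr', hK⟩ := exists_isCompact_closure_ball_of_lt_nu hlt
  have hrr' : r < r' := ((ENNReal.ofReal_lt_ofReal_iff').1 hrr').1
  obtain ⟨p, hp⟩ := exists_mapClusterPt_of_infinite_of_isCompact hS hK fun m hm =>
    subset_closure (Metric.mem_ball.2 ((hSr m hm n hn).trans hrr'))
  exact hu p hp

theorem exists_seq_forall_not_mapClusterPt_of_not_isCompact {K : Set X} (hKc : IsClosed K)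
    (hK : ¬ IsCompact K) : ∃ y : ℕ → X, (∀ k, y k ∈ K) ∧ ∀ p, ¬ MapClusterPt p cofinite y := by
  simp only [isCompact_iff_isSeqCompact, IsSeqCompact, not_forall] at hK
  obtain ⟨y, hyK, hy⟩ := hK
  refine ⟨y, hyK, fun p hp => hy ?_⟩
  obtain ⟨φ, hφ, hlim⟩ := MapClusterPt.tendsto_subseq (Nat.cofinite_eq_atTop ▸ hp)
  exact ⟨p, hKc.mem_of_tendsto hlim (.of_forall fun k => hyK (φ k)), φ, hφ, hlim⟩

theorem cofinallyCauchy_uncurry_unpair_of_dist_le {Y : ℕ → ℕ → X} {x : ℕ → X} {r : ℕ → ℝ}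
    (hr : Tendsto r atTop (𝓝 0)) (hY : ∀ n k, dist (Y n k) (x n) ≤ r n) :
    CofinallyCauchy fun m => Y m.unpair.1 m.unpair.2 := by
  intro ε hε
  obtain ⟨n, hn⟩ := (hr.eventually (gt_mem_nhds (half_pos hε))).exists
  refine ⟨range (Nat.pair n), infinite_range_of_injective fun k k' h => ?_, ?_⟩
  · simpa using congrArg (fun m => m.unpair.2) h
  rintro _ ⟨k, rfl⟩ _ ⟨k', rfl⟩
  simp only [Nat.unpair_pair]
  linarith [dist_triangle_right (Y n k) (Y n k') (x n), hY n k, hY n k']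

end LocalCompactness

section CofinallyComplete

variable {X : Type*} [MetricSpace X]

theorem CofinallyComplete.exists_mapClusterPt_of_frequently_nu_lt (h : CofinallyComplete X)
    {x : ℕ → X} (hx : ∀ η > 0, ∃ᶠ n in atTop, nu (x n) < ENNReal.ofReal η) :
    ∃ p, MapClusterPt p atTop x := by
  obtain ⟨ψ, hψ, hνψ⟩ := extraction_forall_of_frequently fun n : ℕ =>
    hx (1 / (n + 1)) Nat.one_div_pos_of_nat
  by_contra! hno
  have hnoψ : ∀ p, ¬ MapClusterPt p cofinite (x ∘ ψ) := fun p hp =>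
    hno p (hp.of_comp (Nat.cofinite_eq_atTop ▸ hψ.tendsto_atTop))
  choose Y hYmem hYrow using fun n => exists_seq_forall_not_mapClusterPt_of_not_isCompact
    isClosed_closure (not_isCompact_closure_ball_of_nu_lt (hνψ n))
  have hYdist : ∀ n k, dist (Y n k) (x (ψ n)) ≤ 1 / (n + 1) := fun n k =>
    Metric.closure_ball_subset_closedBall (hYmem n k)
  obtain ⟨p, hp⟩ := h _ (cofinallyCauchy_uncurry_unpair_of_dist_le tendsto_one_div_add_atTop_nhds_zero_nat hYdist)
  have hunpair : Tendsto Nat.unpair atTop cofinite :=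
    Nat.cofinite_eq_atTop ▸ Nat.pairEquiv.symm.injective.tendsto_cofinite
  exact not_mapClusterPt_uncurry_of_dist_le
    (Nat.cofinite_eq_atTop ▸ tendsto_one_div_add_atTop_nhds_zero_nat) hYdist hnoψ hYrow p
    (hp.of_comp hunpair)

theorem CofinallyComplete.exists_mapClusterPt_of_forall_mem (h : CofinallyComplete X)
    {A : Set X} (hA : ANLC A) {a : ℕ → X} (ha : ∀ n, a n ∈ A) : ∃ p, MapClusterPt p atTop a := by
  by_cases hsmall : ∀ η > 0, ∃ᶠ n in atTop, nu (a n) < ENNReal.ofReal η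
  · exact h.exists_mapClusterPt_of_frequently_nu_lt hsmall
  push Not at hsmall
  obtain ⟨η, hη, hlarge⟩ := hsmall
  obtain ⟨p, -, hp⟩ := (hA.2.2 η hη).exists_mapClusterPt_of_frequently
    (hlarge.frequently.mono fun n hn => ⟨ha n, hn⟩)
  exact ⟨p, hp⟩

end CofinallyComplete

theorem MapClusterPt.frequently_dist_comp_lt {ι X Y : Type*} [PseudoMetricSpace X]
    [PseudoMetricSpace Y] {l : Filter ι} {a b : ι → X} {p : X} (hp : MapClusterPt p l a)
    (hab : Tendsto (fun i => dist (a i) (b i)) l (𝓝 0)) {f : X → Y} (hf : ContinuousAt f p)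
    {ε : ℝ} (hε : 0 < ε) : ∃ᶠ i in l, dist (f (a i)) (f (b i)) < ε := by
  obtain ⟨δ, hδ, hfδ⟩ := Metric.continuousAt_iff.1 hf (ε / 2) (half_pos hε)
  have hnear : ∃ᶠ i in l, dist (a i) p < δ / 2 :=
    mapClusterPt_iff_frequently.1 hp _ (Metric.ball_mem_nhds p (half_pos hδ))
  refine (hnear.and_eventually (hab.eventually (gt_mem_nhds (half_pos hδ)))).mono
    fun i ⟨ha, hb⟩ => ?_
  have hfa := hfδ (ha.trans (half_lt_self hδ))
  have hfb := @hfδ (b i) (by linarith [dist_triangle_left (b i) p (a i)])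
  linarith [dist_triangle_right (f (a i)) (f (b i)) (f p)]

section Gap

variable {X Y : Type*} [MetricSpace X] [MetricSpace Y]

theorem setGap_eq_zero_iff {A B : Set X} :
    setGap A B = 0 ↔ ∀ ε > 0, ∃ a ∈ A, ∃ b ∈ B, dist a b < ε := by
  constructor
  · intro h ε hε
    have : setGap A B < ENNReal.ofReal ε := h ▸ ENNReal.ofReal_pos.2 hε
    simpa only [setGap, iInf_lt_iff, edist_lt_ofReal, exists_prop] using this
  · intro h
    refine le_antisymm (ENNReal.le_of_forall_pos_le_add fun ε hε _ => ?_) bot_le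
    obtain ⟨a, ha, b, hb, hab⟩ := h ε hε
    calc setGap A B ≤ edist a b := iInf₂_le_of_le a ha (iInf₂_le b hb)
      _ ≤ 0 + ε := by rw [zero_add, edist_dist, ← ENNReal.ofReal_coe_nnreal]; gcongr

theorem CofinallyComplete.strongUnifContOn (h : CofinallyComplete X) {f : X → Y}
    (hf : Continuous f) {A : Set X} (hA : ANLC A) : StrongUnifContOn f A := by
  intro ε hε
  by_contra! hbad
  have hpair : ∀ n : ℕ, ∃ q : X × X,
      q.1 ∈ A ∧ dist q.1 q.2 < 1 / (n + 1) ∧ ε ≤ dist (f q.1) (f q.2) := fun n => by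
    obtain ⟨x, y, hxy, hxA | hyA, hfxy⟩ := hbad (1 / (n + 1)) Nat.one_div_pos_of_nat
    · exact ⟨(x, y), hxA, hxy, hfxy⟩
    · exact ⟨(y, x), hyA, by rwa [dist_comm], by rwa [dist_comm]⟩
  choose q hqA hqdist hqf using hpair
  obtain ⟨p, hp⟩ := h.exists_mapClusterPt_of_forall_mem hA hqA
  have hd : Tendsto (fun n => dist (q n).1 (q n).2) atTop (𝓝 0) :=
    squeeze_zero (fun _ => dist_nonneg) (fun n => (hqdist n).le)
      tendsto_one_div_add_atTop_nhds_zero_nat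
  obtain ⟨n, hn⟩ := (hp.frequently_dist_comp_lt hd hf.continuousAt hε).exists
  exact (hqf n).not_gt hn

theorem StrongUnifContOn.setGap_image_eq_zero {f : X → Y} {A B : Set X}
    (hf : StrongUnifContOn f A) (hAB : setGap A B = 0) : setGap (f '' A) (f '' B) = 0 := by
  refine setGap_eq_zero_iff.2 fun ε hε => ?_
  obtain ⟨δ, hδ, hfδ⟩ := hf ε hε
  obtain ⟨a, ha, b, hb, hab⟩ := setGap_eq_zero_iff.1 hAB δ hδ
  exact ⟨f a, mem_image_of_mem f ha, f b, mem_image_of_mem f hb, hfδ a b hab (.inl ha)⟩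

end Gap

theorem exists_injective_forall_mem {α : Type*} {V : ℕ → Set α} (hV : ∀ n, (V n).Infinite) :
    ∃ c : ℕ → α, Function.Injective c ∧ ∀ n, c n ∈ V n := by
  -- Choose `c n` in `V n` outside the earlier values; `n` is recovered as their number.
  obtain ⟨c, hc⟩ := seq_of_forall_finite_exists (P := fun a t => a ∈ V t.ncard ∧ a ∉ t)
    fun t ht => ((hV t.ncard).sdiff ht).nonempty
  have hinj : Function.Injective c :=
    Function.Injective.of_lt_imp_ne fun m n hmn h => (hc n).2 ⟨m, mem_Iio.2 hmn, h⟩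
  refine ⟨c, hinj, fun n => ?_⟩
  simpa only [ncard_image_of_injective _ hinj, ncard_Iio_nat] using (hc n).1

section Separation

variable {X : Type*} [MetricSpace X]

theorem anlc_range_of_mem_image {u : ℕ → X} (hu : ∀ p, ¬ MapClusterPt p cofinite u)
    {S : ℕ → Set ℕ} (hS : ∀ k, (S k).Infinite) {r : ℕ → ℝ} (hr : Tendsto r atTop (𝓝 0))
    (hSr : ∀ k, ∀ m ∈ S k, ∀ n ∈ S k, dist (u m) (u n) < r k) {a : ℕ → X}
    (ha : ∀ k, a k ∈ u '' S k) : ANLC (range a) := by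
  refine ⟨range_nonempty a, isClosed_of_subset_range_of_forall_not_mapClusterPt hu
    (range_subset_iff.2 fun k => image_subset_range u _ (ha k)), fun ε hε => ?_⟩
  have hfin : {k | ¬ r k < ε}.Finite :=
    eventually_cofinite.1 ((Nat.cofinite_eq_atTop ▸ hr).eventually (gt_mem_nhds hε))
  refine ((hfin.image a).subset ?_).isCompact
  rintro _ ⟨⟨k, rfl⟩, hk⟩
  refine ⟨k, fun hrk => ?_, rfl⟩
  exact (hk.trans (nu_le_of_mem_image hu (hS k) (hSr k) (ha k))).not_gt
    ((ENNReal.ofReal_lt_ofReal_iff hε).2 hrk)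

theorem CofinallyCauchy.exists_anlc_of_forall_not_mapClusterPt {u : ℕ → X}
    (hu : CofinallyCauchy u) (hno : ∀ p, ¬ MapClusterPt p atTop u) :
    ∃ A B : Set X, ANLC A ∧ B.Nonempty ∧ IsClosed B ∧ Disjoint A B ∧ setGap A B = 0 := by
  rw [← Nat.cofinite_eq_atTop] at hno
  choose S hSinf hSdist using fun k : ℕ => hu (1 / (k + 1)) Nat.one_div_pos_of_nat
  obtain ⟨c, hc, hcS⟩ := exists_injective_forall_mem fun n =>
    (hSinf (n / 2)).image_of_forall_not_mapClusterPt hno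
  have heven : ∀ k, c (2 * k) ∈ u '' S k := fun k => by
    simpa only [Nat.mul_div_cancel_left k two_pos] using hcS (2 * k)
  have hodd : ∀ k, c (2 * k + 1) ∈ u '' S k := fun k => by
    simpa only [show (2 * k + 1) / 2 = k by omega] using hcS (2 * k + 1)
  refine ⟨range fun k => c (2 * k), range fun k => c (2 * k + 1),
    anlc_range_of_mem_image hno hSinf tendsto_one_div_add_atTop_nhds_zero_nat hSdist heven,
    range_nonempty _, isClosed_of_subset_range_of_forall_not_mapClusterPt hno
      (range_subset_iff.2 fun k => image_subset_range u _ (hodd k)), ?_, ?_⟩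
  · rw [disjoint_left]
    rintro _ ⟨j, rfl⟩ ⟨k, hk⟩
    have := hc hk
    omega
  · refine setGap_eq_zero_iff.2 fun ε hε => ?_
    obtain ⟨k, hk⟩ := exists_nat_one_div_lt hε
    obtain ⟨m, hm, hma⟩ := heven k
    obtain ⟨n, hn, hnb⟩ := hodd k
    exact ⟨_, mem_range_self k, _, mem_range_self k,
      hma ▸ hnb ▸ (hSdist k m hm n hn).trans hk⟩

theorem exists_continuous_setGap_image_ne_zero {A B : Set X} (hA : IsClosed A)
    (hB : IsClosed B) (hAB : Disjoint A B) :
    ∃ g : X → ULift.{v} ℝ, Continuous g ∧ setGap (g '' A) (g '' B) ≠ 0 := by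
  obtain ⟨g, hgA, hgB, -⟩ := exists_continuous_zero_one_of_isClosed hA hB hAB
  refine ⟨fun x => ULift.up (g x), continuous_uliftUp.comp g.continuous, fun h => ?_⟩
  obtain ⟨_, ⟨a, ha, rfl⟩, _, ⟨b, hb, rfl⟩, hab⟩ := setGap_eq_zero_iff.1 h 1 one_pos
  simp [ULift.dist_eq, hgA ha, hgB hb] at hab

end Separation

theorem cofinallyComplete_iff_strongUnifCont_on_ANLC {X : Type u} [MetricSpace X] :
    List.TFAE
      [CofinallyComplete X,
       ∀ (Y : Type v) [MetricSpace Y] (f : X → Y), Continuous f →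
         ∀ A : Set X, ANLC A → StrongUnifContOn f A,
       ∀ (Y : Type v) [MetricSpace Y] (f : X → Y), Continuous f →
         ∀ A B : Set X, ANLC A → B.Nonempty → setGap A B = 0 →
           setGap (f '' A) (f '' B) = 0] := by
  tfae_have 1 → 2 := fun h _ _ _ hf _ hA => h.strongUnifContOn hf hA
  tfae_have 2 → 3 := fun h Y _ f hf A _ hA _ hAB => (h Y f hf A hA).setGap_image_eq_zero hAB
  tfae_have 3 → 1 := by
    intro h u hu
    by_contra! hno
    obtain ⟨A, B, hA, hB, hBc, hAB, hgap⟩ := hu.exists_anlc_of_forall_not_mapClusterPt hno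
    obtain ⟨g, hg, hne⟩ := exists_continuous_setGap_image_ne_zero hA.2.1 hBc hAB
    exact hne (h _ g hg A B hA hB hgap)
  tfae_finish
end

section
/- Let (X,d) be a metric space. The following are equivalent: (a) (X,d) is a UC space, i.e., every continuous real-valued function on X is uniformly continuous; (b) for every metric space (Y,ρ), every continuous function f : (X,d) → (Y,ρ) is strongly uniformly continuous on each subset of X; (c) for every metric space (Y,ρ), every continuous function f : (X,d) → (Y,ρ) is strongly uniformly continuous on each closed subset of X. -/
universe u v

/-!
If a continuous `f : X → Y` is not uniformly continuous, there are sequences `xₙ, yₙ` with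
`d(xₙ, yₙ) → 0` but `ρ(f xₙ, f yₙ) ≥ ε`. Continuity of `f` forbids both sequences to accumulate
anywhere, so their singletons form locally finite families; a subsequence then yields two disjoint
closed sets at distance zero. In a UC space this is impossible: an Urysohn function separating the
two sets would be continuous without being uniformly continuous.
-/

open Filter Topology Metric Set

def UCSpace (X : Type*) [UniformSpace X] : Prop :=
  ∀ f : X → ℝ, Continuous f → UniformContinuous f

section StrongUnifContOn

variable {X : Type u} {Y : Type v} [MetricSpace X] [MetricSpace Y] {f : X → Y}

theorem UniformContinuous.strongUnifContOn (hf : UniformContinuous f) (B : Set X) :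
    StrongUnifContOn f B := fun ε hε =>
  let ⟨δ, hδ, h⟩ := Metric.uniformContinuous_iff.1 hf ε hε
  ⟨δ, hδ, fun _ _ hxy _ => h hxy⟩

theorem StrongUnifContOn.uniformContinuous (hf : StrongUnifContOn f univ) :
    UniformContinuous f :=
  Metric.uniformContinuous_iff.2 fun ε hε =>
    let ⟨δ, hδ, h⟩ := hf ε hε
    ⟨δ, hδ, fun _ _ hxy => h _ _ hxy (Or.inl trivial)⟩

end StrongUnifContOn

theorem isClosed_range_of_locallyFinite_singleton {ι X : Type*} [TopologicalSpace X] [T1Space X]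
    {z : ι → X} (hz : LocallyFinite fun i => ({z i} : Set X)) : IsClosed (range z) := by
  simpa only [iUnion_singleton_eq_range] using hz.isClosed_iUnion fun _ => isClosed_singleton

theorem LocallyFinite.eventually_ne {X : Type*} [TopologicalSpace X] {z : ℕ → X}
    (hz : LocallyFinite fun n => ({z n} : Set X)) (p : X) : ∀ᶠ n in atTop, z n ≠ p := by
  rw [← Nat.cofinite_eq_atTop]
  exact (hz.point_finite p).eventually_cofinite_notMem.mono fun _ hn h => hn h.symm

section Sequences

variable {X Y : Type*} [MetricSpace X] [MetricSpace Y] {f : X → Y}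

theorem exists_seq_of_not_uniformContinuous (hf : ¬UniformContinuous f) :
    ∃ ε > 0, ∃ x y : ℕ → X, Tendsto (fun n => dist (x n) (y n)) atTop (𝓝 0) ∧
      ∀ n, ε ≤ dist (f (x n)) (f (y n)) := by
  rw [Metric.uniformContinuous_iff] at hf
  push Not at hf
  obtain ⟨ε, hε, h⟩ := hf
  choose x y hxy hfxy using fun n : ℕ => h (1 / (n + 1)) Nat.one_div_pos_of_nat
  refine ⟨ε, hε, x, y, ?_, hfxy⟩
  exact squeeze_zero (fun _ => dist_nonneg) (fun n => (hxy n).le)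
    tendsto_one_div_add_atTop_nhds_zero_nat

/-- Near any point `p`, continuity keeps `f` within `ε / 2` of `f p`, so once `d(xₙ, yₙ)` is small
the point `xₙ` cannot come close to `p`. -/
theorem locallyFinite_singleton_of_tendsto_dist (hf : Continuous f) {ε : ℝ} (hε : 0 < ε)
    {x y : ℕ → X} (hxy : Tendsto (fun n => dist (x n) (y n)) atTop (𝓝 0))
    (hfxy : ∀ n, ε ≤ dist (f (x n)) (f (y n))) :
    LocallyFinite fun n => ({x n} : Set X) := by
  intro p
  obtain ⟨δ, hδ, hfp⟩ := Metric.continuous_iff.1 hf p (ε / 2) (half_pos hε)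
  refine ⟨ball p (δ / 2), ball_mem_nhds p (half_pos hδ), ?_⟩
  have hclose : ∀ᶠ n in cofinite, dist (x n) (y n) < δ / 2 := by
    rw [Nat.cofinite_eq_atTop]
    exact hxy.eventually (gt_mem_nhds (half_pos hδ))
  refine (Filter.eventually_cofinite.1 hclose).subset fun n hn hsmall => ?_
  obtain ⟨_, rfl, hxp⟩ := hn
  rw [mem_ball] at hxp
  have hyp : dist (y n) p < δ := by
    calc dist (y n) p ≤ dist (x n) (y n) + dist (x n) p := dist_triangle_left _ _ _
      _ < δ / 2 + δ / 2 := add_lt_add hsmall hxp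
      _ = δ := add_halves δ
  have hfar : dist (f (x n)) (f (y n)) < ε := by
    calc dist (f (x n)) (f (y n)) ≤ dist (f (x n)) (f p) + dist (f (y n)) (f p) :=
          dist_triangle_right _ _ _
      _ < ε / 2 + ε / 2 := add_lt_add (hfp _ (hxp.trans (half_lt_self hδ))) (hfp _ hyp)
      _ = ε := add_halves ε
  exact (hfxy n).not_gt hfar

end Sequences

namespace UCSpace

variable {X : Type*} [MetricSpace X]

theorem exists_pos_le_dist (hX : UCSpace X) {A B : Set X} (hA : IsClosed A) (hB : IsClosed B)
    (hAB : Disjoint A B) : ∃ δ > 0, ∀ a ∈ A, ∀ b ∈ B, δ ≤ dist a b := by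
  obtain ⟨g, hgA, hgB, -⟩ := exists_continuous_zero_one_of_isClosed hA hB hAB
  obtain ⟨δ, hδ, hg⟩ := Metric.uniformContinuous_iff.1 (hX g g.continuous) 1 one_pos
  refine ⟨δ, hδ, fun a ha b hb => not_lt.1 fun hab => ?_⟩
  have := hg hab
  rw [hgA ha, hgB hb] at this
  norm_num at this

theorem uniformContinuous {Y : Type*} [MetricSpace Y] (hX : UCSpace X) {f : X → Y}
    (hf : Continuous f) : UniformContinuous f := by
  by_contra hnu
  obtain ⟨ε, hε, x, y, hxy, hfxy⟩ := exists_seq_of_not_uniformContinuous hnu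
  have hx := locallyFinite_singleton_of_tendsto_dist hf hε hxy hfxy
  have hy := locallyFinite_singleton_of_tendsto_dist hf hε (x := y) (y := x)
    (by simpa only [dist_comm] using hxy) (by simpa only [dist_comm] using hfxy)
  have hne : ∀ n, x n ≠ y n := fun n h => by
    simpa [h, not_le.2 hε] using hfxy n
  -- `subbasis_with_rel` is used only for the extraction `φ` it provides.
  obtain ⟨φ, hφ, hsep, -⟩ := (hasAntitoneBasis_atTop (α := ℕ)).subbasis_with_rel
    (r := fun m n => x n ≠ y m ∧ y n ≠ x m) fun m => (hx.eventually_ne (y m)).and (hy.eventually_ne (x m))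
  have hdisj : Disjoint (range (x ∘ φ)) (range (y ∘ φ)) := by
    refine disjoint_left.2 ?_
    rintro _ ⟨j, rfl⟩ ⟨k, hk⟩
    rcases lt_trichotomy j k with hjk | rfl | hkj
    · exact (hsep hjk).2 hk
    · exact hne _ hk.symm
    · exact (hsep hkj).1 hk.symm
  obtain ⟨δ, hδ, hfar⟩ := hX.exists_pos_le_dist
    (isClosed_range_of_locallyFinite_singleton (hx.comp_injective hφ.injective))
    (isClosed_range_of_locallyFinite_singleton (hy.comp_injective hφ.injective)) hdisj
  obtain ⟨n, hn⟩ := ((hxy.comp hφ.tendsto_atTop).eventually (gt_mem_nhds hδ)).exists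
  exact (hfar _ ⟨n, rfl⟩ _ ⟨n, rfl⟩).not_gt hn

end UCSpace

theorem uc_iff_strongUnifCont_on_subsets {X : Type u} [MetricSpace X] :
    List.TFAE
      [∀ f : X → ℝ, Continuous f → UniformContinuous f,
       ∀ (Y : Type v) [MetricSpace Y] (f : X → Y), Continuous f →
         ∀ B : Set X, StrongUnifContOn f B,
       ∀ (Y : Type v) [MetricSpace Y] (f : X → Y), Continuous f →
         ∀ B : Set X, IsClosed B → StrongUnifContOn f B] := by
  tfae_have 1 → 2 := fun hX _ _ _ hf B =>
    (UCSpace.uniformContinuous hX hf).strongUnifContOn B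
  tfae_have 2 → 3 := fun h Y _ f hf B _ => h Y f hf B
  tfae_have 3 → 1 := fun h f hf => by
    have hup : Isometry (ULift.up.{v} : ℝ → ULift ℝ) := Isometry.of_dist_eq fun _ _ => rfl
    exact hup.isUniformInducing.uniformContinuous_iff.2
      (h _ _ (continuous_uliftUp.comp hf) univ isClosed_univ).uniformContinuous
  tfae_finish
end

section
/- Let (X,d) be a metric space and let A be a nonempty subset of X. Then the following are equivalent: (a) A is a UC set, i.e., every sequence (aₙ) in A with I(aₙ) → 0 has a cluster point in X, where I(x) = d(x, X \ {x}); (b) whenever f : (X,d) → ℝ is a continuous function with f(x) ≠ 0 for all x ∈ X such that f is strongly uniformly continuous on A, then 1/f is also strongly uniformly continuous on A. -/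
/-!
The forward direction holds for every continuous function: if pairs `pₙ ∈ A`, `qₙ ≠ pₙ` with
`d(pₙ, qₙ) → 0` witness a failure of strong uniform continuity, then `I(pₙ) → 0`, so `(pₙ)`
clusters at some point, and continuity there gives a contradiction.

Conversely, let `(aₙ)` in `A` have `I(aₙ) → 0` and no cluster point. We build a positive
1-Lipschitz `f` whose values at points of `A` are at most half of its values at arbitrarily close
points, and at most `1/2`; then `1/f` is not strongly uniformly continuous on `A`.
If `{aₙ}` is totally bounded, `(aₙ)` clusters at a point `ξ` of the completion lying outside `X`,
and `f = d(·, ξ)`. Otherwise some subsequence `(cₙ)` is `e`-separated; choosing `bₙ ≠ cₙ` with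
`dₙ = d(cₙ, bₙ) → 0`, the function `f = infₙ (dₙ + d(·, cₙ))` satisfies `f(cₙ) ≤ dₙ ≤ f(bₙ) / 2`
as soon as `dₙ < e / 4`.
-/

universe u v

open Filter

/-- The isolation functional `I x = d(x, X \ {x})`. -/
noncomputable def isolFn {X : Type u} [MetricSpace X] (x : X) : ℝ :=
  Metric.infDist x {y : X | y ≠ x}

/-- `A` is a UC set if every sequence in `A` whose isolation functional tends to `0`
has a cluster point in `X`. -/
def UCSet {X : Type u} [MetricSpace X] (A : Set X) : Prop :=
  ∀ a : ℕ → X, (∀ n, a n ∈ A) →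
    Tendsto (fun n => isolFn (a n)) atTop (nhds 0) → ∃ p : X, MapClusterPt p atTop a

open Set Topology

section

variable {X : Type*} [MetricSpace X]

theorem isolFn_nonneg (x : X) : 0 ≤ isolFn x :=
  Metric.infDist_nonneg

theorem isolFn_le_dist {x y : X} (hy : y ≠ x) : isolFn x ≤ dist x y :=
  Metric.infDist_le_dist_of_mem hy

theorem exists_ne_dist_lt_isolFn_add {x : X} (hx : ∃ y, y ≠ x) {r : ℝ} (hr : 0 < r) :
    ∃ y, y ≠ x ∧ dist x y < isolFn x + r :=
  (Metric.infDist_lt_iff hx).1 (lt_add_of_pos_right _ hr)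

theorem StrongUnifContOn.of_lipschitzWith {Y : Type*} [MetricSpace Y] {f : X → Y} {K : NNReal}
    (hf : LipschitzWith K f) (B : Set X) : StrongUnifContOn f B := by
  intro ε hε
  refine ⟨ε / (K + 1), by positivity, fun x y hxy _ => ?_⟩
  calc dist (f x) (f y) ≤ K * dist x y := hf.dist_le_mul x y
    _ ≤ (K + 1) * dist x y := by gcongr; linarith
    _ < (K + 1) * (ε / (K + 1)) := by gcongr
    _ = ε := by field_simp

theorem exists_seq_of_not_strongUnifContOn {Y : Type*} [MetricSpace Y] {g : X → Y} {B : Set X}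
    (h : ¬StrongUnifContOn g B) :
    ∃ ε > 0, ∃ p q : ℕ → X, (∀ n, p n ∈ B) ∧
      Tendsto (fun n => dist (p n) (q n)) atTop (𝓝 0) ∧ ∀ n, ε ≤ dist (g (p n)) (g (q n)) := by
  unfold StrongUnifContOn at h
  push Not at h
  obtain ⟨ε, hε, H⟩ := h
  have hpair : ∀ n : ℕ, ∃ p q, p ∈ B ∧ dist p q < 1 / (n + 1) ∧ ε ≤ dist (g p) (g q) := by
    intro n
    obtain ⟨x, y, hxy, hB, hgxy⟩ := H _ Nat.one_div_pos_of_nat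
    rcases hB with hx | hy
    · exact ⟨x, y, hx, hxy, hgxy⟩
    · exact ⟨y, x, hy, dist_comm x y ▸ hxy, dist_comm (g x) (g y) ▸ hgxy⟩
  choose p q hpB hpq hgpq using hpair
  exact ⟨ε, hε, p, q, hpB, squeeze_zero (fun _ => dist_nonneg) (fun n => (hpq n).le)
    tendsto_one_div_add_atTop_nhds_zero_nat, hgpq⟩

theorem UCSet.strongUnifContOn {Y : Type*} [MetricSpace Y] {A : Set X} (hA : UCSet A)
    {g : X → Y} (hg : Continuous g) : StrongUnifContOn g A := by
  by_contra h
  obtain ⟨ε, hε, p, q, hpA, hpq, hgpq⟩ := exists_seq_of_not_strongUnifContOn h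
  have hqp : ∀ n, q n ≠ p n := fun n hn => by
    simpa [hn, hε.not_ge] using hgpq n
  obtain ⟨z, hz⟩ := hA p hpA <|
    squeeze_zero (fun n => isolFn_nonneg _) (fun n => isolFn_le_dist (hqp n)) hpq
  obtain ⟨ψ, hψ, hpz⟩ := hz.tendsto_subseq
  have hqz : Tendsto (q ∘ ψ) atTop (𝓝 z) := hpz.congr_dist (hpq.comp hψ.tendsto_atTop)
  have hgpq0 : Tendsto (fun n => dist (g (p (ψ n))) (g (q (ψ n)))) atTop (𝓝 0) := by
    simpa using ((hg.tendsto z).comp hpz).dist ((hg.tendsto z).comp hqz)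
  exact hε.not_ge (ge_of_tendsto' hgpq0 fun n => hgpq (ψ n))

theorem not_strongUnifContOn_inv {f : X → ℝ} {B : Set X} (hf : ∀ x, 0 < f x)
    (h : ∀ δ > 0, ∃ x ∈ B, ∃ y, dist x y < δ ∧ f x ≤ 1 / 2 ∧ 2 * f x ≤ f y) :
    ¬StrongUnifContOn (fun x => (f x)⁻¹) B := by
  intro hinv
  obtain ⟨δ, hδ, hδ'⟩ := hinv 1 one_pos
  obtain ⟨x, hx, y, hxy, hx2, hxy2⟩ := h δ hδ
  have hfx := hf x
  have hfy : (f y)⁻¹ ≤ (2 * f x)⁻¹ := inv_anti₀ (by positivity) hxy2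
  refine (hδ' x y hxy (.inl hx)).not_ge ?_
  calc 1 ≤ (2 * f x)⁻¹ := by rw [one_le_inv₀ (by positivity)]; linarith
    _ = (f x)⁻¹ - (2 * f x)⁻¹ := by field_simp; ring
    _ ≤ (f x)⁻¹ - (f y)⁻¹ := by linarith
    _ ≤ dist (f x)⁻¹ (f y)⁻¹ := (le_abs_self _).trans_eq (Real.dist_eq _ _).symm

theorem exists_lipschitzWith_not_strongUnifContOn_inv_of_mapClusterPt {Y : Type*}
    [MetricSpace Y] {j : X → Y} (hj : Isometry j) {A : Set X} {c : ℕ → X} (hcA : ∀ n, c n ∈ A)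
    {ξ : Y} (hξ : MapClusterPt ξ atTop (j ∘ c)) (hξX : ξ ∉ range j) :
    ∃ f : X → ℝ, LipschitzWith 1 f ∧ (∀ x, 0 < f x) ∧
      ¬StrongUnifContOn (fun x => (f x)⁻¹) A := by
  set f : X → ℝ := fun x => dist (j x) ξ
  have hf : LipschitzWith 1 f :=
    ((LipschitzWith.dist_left ξ).comp hj.lipschitz).weaken (mul_one 1).le
  have hpos : ∀ x, 0 < f x := fun x => dist_pos.2 fun h => hξX ⟨x, h⟩
  have hnear : ∀ r > 0, ∃ n, f (c n) < r := fun r hr =>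
    (mapClusterPt_iff_frequently.1 hξ _ (Metric.ball_mem_nhds ξ hr)).exists
  refine ⟨f, hf, hpos, not_strongUnifContOn_inv hpos fun δ hδ => ?_⟩
  obtain ⟨n, hn⟩ := hnear (min (δ / 2) 1) (by positivity)
  obtain ⟨m, hm⟩ := hnear (f (c n) / 2) (half_pos (hpos _))
  have hnδ := hn.trans_le (min_le_left _ _)
  have hn1 := hn.trans_le (min_le_right _ _)
  refine ⟨c m, hcA m, c n, ?_, by linarith, by linarith⟩
  calc dist (c m) (c n) = dist (j (c m)) (j (c n)) := (hj.dist_eq _ _).symm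
    _ ≤ f (c m) + f (c n) := dist_triangle_right _ _ _
    _ < δ := by linarith

theorem half_le_dist_of_pairwise_le_dist {c : ℕ → X} {e : ℝ}
    (hsep : Pairwise fun i j => e ≤ dist (c i) (c j)) {x : X} {k m : ℕ}
    (hk : dist x (c k) < e / 2) (hmk : m ≠ k) : e / 2 ≤ dist x (c m) := by
  have := dist_triangle_left (c m) (c k) x
  linarith [hsep hmk]

theorem exists_forall_ne_half_le_dist {c : ℕ → X} {e : ℝ}
    (hsep : Pairwise fun i j => e ≤ dist (c i) (c j)) (x : X) :
    ∃ k, ∀ m ≠ k, e / 2 ≤ dist x (c m) := by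
  by_cases h : ∃ k, dist x (c k) < e / 2
  · obtain ⟨k, hk⟩ := h
    exact ⟨k, fun m hmk => half_le_dist_of_pairwise_le_dist hsep hk hmk⟩
  · push Not at h
    exact ⟨0, fun m _ => h m⟩

section InfAddDist

variable {ι : Type*} {t : ι → ℝ} (c : ι → X)

theorem iInf_add_dist_le (ht : ∀ i, 0 ≤ t i) (x : X) (i : ι) :
    ⨅ j, (t j + dist x (c j)) ≤ t i + dist x (c i) :=
  ciInf_le ⟨0, forall_mem_range.2 fun j => add_nonneg (ht j) dist_nonneg⟩ i

theorem lipschitzWith_iInf_add_dist [Nonempty ι] (ht : ∀ i, 0 ≤ t i) :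
    LipschitzWith 1 fun x => ⨅ i, (t i + dist x (c i)) := by
  refine LipschitzWith.of_le_add_mul 1 fun x y => ?_
  rw [NNReal.coe_one, one_mul, ← sub_le_iff_le_add]
  refine le_ciInf fun i => ?_
  have := iInf_add_dist_le c ht x i
  linarith [dist_triangle x y (c i)]

theorem min_le_iInf_add_dist (ht : ∀ i, 0 ≤ t i) {x : X} {k : ι} {r : ℝ}
    (hk : ∀ i ≠ k, r ≤ dist x (c i)) :
    min (t k + dist x (c k)) r ≤ ⨅ i, (t i + dist x (c i)) := by
  have : Nonempty ι := ⟨k⟩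
  refine le_ciInf fun i => ?_
  rcases eq_or_ne i k with rfl | hik
  · exact min_le_left _ _
  · linarith [min_le_right (t k + dist x (c k)) r, hk i hik, ht i]

end InfAddDist

theorem exists_lipschitzWith_not_strongUnifContOn_inv_of_pairwise {A : Set X} {c : ℕ → X}
    (hcA : ∀ n, c n ∈ A) {e : ℝ} (he : 0 < e) (hsep : Pairwise fun i j => e ≤ dist (c i) (c j))
    (hiso : Tendsto (fun n => isolFn (c n)) atTop (𝓝 0)) :
    ∃ f : X → ℝ, LipschitzWith 1 f ∧ (∀ x, 0 < f x) ∧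
      ¬StrongUnifContOn (fun x => (f x)⁻¹) A := by
  have hne : ∀ n, ∃ y, y ≠ c n := fun n =>
    ⟨c (n + 1), fun h => by simpa [h, he.not_ge] using hsep (Nat.succ_ne_self n)⟩
  choose b hb hbc using fun n =>
    exists_ne_dist_lt_isolFn_add (hne n) (Nat.one_div_pos_of_nat (n := n))
  set d : ℕ → ℝ := fun n => dist (c n) (b n)
  have hd : ∀ n, 0 < d n := fun n => dist_pos.2 (hb n).symm
  have hd0 : Tendsto d atTop (𝓝 0) := squeeze_zero (fun n => (hd n).le) (fun n => (hbc n).le)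
    (by simpa using hiso.add tendsto_one_div_add_atTop_nhds_zero_nat)
  set f : X → ℝ := fun x => ⨅ n, (d n + dist x (c n))
  have hpos : ∀ x, 0 < f x := fun x => by
    obtain ⟨k, hk⟩ := exists_forall_ne_half_le_dist hsep x
    exact (lt_min (by linarith [hd k, dist_nonneg (x := x) (y := c k)]) (half_pos he)).trans_le
      (min_le_iInf_add_dist c (fun n => (hd n).le) hk)
  refine ⟨f, lipschitzWith_iInf_add_dist c (fun n => (hd n).le), hpos,
    not_strongUnifContOn_inv hpos fun δ hδ => ?_⟩
  obtain ⟨n, hnδ, hde, hn1⟩ := ((hd0.eventually_lt_const hδ).and <|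
    (hd0.eventually_lt_const (by positivity : 0 < e / 4)).and <|
      hd0.eventually_lt_const (by norm_num : (0 : ℝ) < 1 / 4)).exists
  have hfc : f (c n) ≤ d n := by
    simpa using iInf_add_dist_le c (fun n => (hd n).le) (c n) n
  have hfb : 2 * d n ≤ f (b n) := by
    have hbn : dist (b n) (c n) < e / 2 := by rw [dist_comm]; linarith
    have := min_le_iInf_add_dist c (fun n => (hd n).le)
      fun m hm => half_le_dist_of_pairwise_le_dist hsep hbn hm
    rw [dist_comm] at this
    exact le_trans (le_min (by linarith) (by linarith)) this
  exact ⟨c n, hcA n, b n, hnδ, by linarith, by linarith⟩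

theorem exists_separated_seq_of_not_totallyBounded {s : Set X} (hs : ¬TotallyBounded s) :
    ∃ e > 0, ∃ u : ℕ → X, (∀ n, u n ∈ s) ∧ Pairwise fun i j => e ≤ dist (u i) (u j) := by
  simp only [Metric.totallyBounded_iff, not_forall, exists_prop] at hs
  obtain ⟨e, he, hcover⟩ := hs
  obtain ⟨u, hu⟩ := seq_of_forall_finite_exists
    (P := fun x t => x ∈ s ∧ ∀ y ∈ t, e ≤ dist x y) fun t ht => by
      obtain ⟨x, hxs, hx⟩ := not_subset.1 fun hsub => hcover ⟨t, ht, hsub⟩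
      simp only [mem_iUnion, Metric.mem_ball, not_exists, not_lt] at hx
      exact ⟨x, hxs, hx⟩
  refine ⟨e, he, u, fun n => (hu n).1, fun i j hij => ?_⟩
  rcases hij.lt_or_gt with h | h
  · rw [dist_comm]
    exact (hu j).2 _ ⟨i, h, rfl⟩
  · exact (hu i).2 _ ⟨j, h, rfl⟩

theorem exists_lipschitzWith_not_strongUnifContOn_inv_of_not_ucSet {A : Set X}
    (hA : ¬UCSet A) :
    ∃ f : X → ℝ, LipschitzWith 1 f ∧ (∀ x, 0 < f x) ∧
      ¬StrongUnifContOn (fun x => (f x)⁻¹) A := by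
  simp only [UCSet, not_forall, not_exists, exists_prop] at hA
  obtain ⟨a, haA, hiso, hcl⟩ := hA
  by_cases htb : TotallyBounded (range a)
  · let j : X → UniformSpace.Completion X := (↑)
    have hj : Isometry j := UniformSpace.Completion.coe_isometry
    have hcpt : IsCompact (closure (j '' range a)) :=
      (htb.image (UniformSpace.Completion.uniformContinuous_coe X)).closure.isCompact_of_isClosed
        isClosed_closure
    obtain ⟨ξ, -, hξ⟩ := hcpt.exists_mapClusterPt (u := j ∘ a) (f := atTop) <|
      tendsto_principal.2 <| Eventually.of_forall fun k =>
        subset_closure ⟨a k, mem_range_self k, rfl⟩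
    refine exists_lipschitzWith_not_strongUnifContOn_inv_of_mapClusterPt hj haA hξ ?_
    rintro ⟨x, rfl⟩
    exact hcl x (hj.isEmbedding.isInducing.mapClusterPt_iff.1 hξ)
  · obtain ⟨e, he, u, hu, hsep⟩ := exists_separated_seq_of_not_totallyBounded htb
    choose φ hφ using hu
    have hφinj : Function.Injective φ := fun i j hij => by
      by_contra hne
      have : e ≤ dist (u i) (u j) := hsep hne
      rw [← hφ i, ← hφ j, hij, dist_self] at this
      linarith
    refine exists_lipschitzWith_not_strongUnifContOn_inv_of_pairwise (c := u) (fun k => ?_)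
      he hsep ?_
    · rw [← hφ k]; exact haA _
    · simpa only [Function.comp_def, hφ] using hiso.comp hφinj.nat_tendsto_atTop

end

theorem ucSet_iff_reciprocal_strongUnifCont_general {X : Type u} [MetricSpace X]
    (A : Set X) :
    UCSet A ↔
      ∀ f : X → ℝ, Continuous f → (∀ x : X, f x ≠ 0) → StrongUnifContOn f A →
        StrongUnifContOn (fun x => (f x)⁻¹) A := by
  refine ⟨fun hA f hf hf0 _ => hA.strongUnifContOn (hf.inv₀ hf0), fun h => ?_⟩
  by_contra hA
  obtain ⟨f, hf, hpos, hinv⟩ := exists_lipschitzWith_not_strongUnifContOn_inv_of_not_ucSet hA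
  exact hinv (h f hf.continuous (fun x => (hpos x).ne') (.of_lipschitzWith hf A))

theorem ucSet_iff_reciprocal_strongUnifCont {X : Type u} [MetricSpace X]
    (A : Set X) (hA : A.Nonempty) :
    UCSet A ↔
      ∀ f : X → ℝ, Continuous f → (∀ x : X, f x ≠ 0) → StrongUnifContOn f A →
        StrongUnifContOn (fun x => (f x)⁻¹) A :=
  ucSet_iff_reciprocal_strongUnifCont_general A
end
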